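/- arXiv:2311.04117 — 8 statements merged into one kernel-verified Lean document; each statement's English description precedes it below -/
import Mathlib

section
/- Let H be a real Hilbert space and T : H → H a nonexpansive (1-Lipschitz) and cyclically monotone map (i.e., for every n ≥ 2 and every finite cycle x₁,…,xₙ₊₁ in H with xₙ₊₁ = x₁, one has ∑_{k=1}^n ⟨x_{k+1} − x_k, T x_k⟩ ≤ 0). Then there exists a proper lower semicontinuous convex function f : H → ℝ ∪ {+∞} such that T is the proximity operator of f, i.e., for every x ∈ H, T x is the unique minimizer of y ↦ f(y) + ‖x − y‖²/2. -/
/-!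
Rockafellar's construction turns the cyclically monotone `T` into a real convex potential `h`
with `T x ∈ ∂h x`. Nonexpansiveness of `T` upgrades this, by repeated midpoint subdivision, to the
descent lemma `h w ≤ h x + ⟪w - x, T x⟫ + ‖w - x‖² / 2`, and hence to the co-coercive inequality
`h x + ⟪w - x, T x⟫ + ‖T w - T x‖² / 2 ≤ h w`. The function `f = h* - ‖·‖² / 2` is then proper,
lsc and convex, and the co-coercive inequality says exactly that `T` is its proximity operator.
-/

open RealInnerProductSpace Filter Topology

/-- `f : H → EReal` is proper, lower semicontinuous, and convex. -/
def ProperLscConvex {H : Type*} [NormedAddCommGroup H] [InnerProductSpace ℝ H]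
    (f : H → EReal) : Prop :=
  (∃ x, f x ≠ ⊤) ∧ (∀ x, f x ≠ ⊥) ∧ LowerSemicontinuous f ∧
    ∀ x y : H, ∀ t : ℝ, 0 ≤ t → t ≤ 1 →
      f (t • x + (1 - t) • y) ≤ (t : EReal) * f x + ((1 - t : ℝ) : EReal) * f y

section

variable {H : Type*} [NormedAddCommGroup H] [InnerProductSpace ℝ H] {T : H → H} {h : H → ℝ}

section RockafellarPotential

noncomputable def chainSum (T : H → H) (n : ℕ) (c : ℕ → H) : ℝ :=
  ∑ k ∈ Finset.range n, ⟪c (k + 1) - c k, T (c k)⟫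

def CyclicallyMonotone (T : H → H) : Prop :=
  ∀ n : ℕ, 2 ≤ n → ∀ c : ℕ → H, c n = c 0 → chainSum T n c ≤ 0

lemma chainSum_update_succ (n : ℕ) (c : ℕ → H) (z : H) :
    chainSum T (n + 1) (Function.update c (n + 1) z) = chainSum T n c + ⟪z - c n, T (c n)⟫ := by
  have hc : ∀ k ≤ n, Function.update c (n + 1) z k = c k := fun k hk =>
    Function.update_of_ne (by omega) _ _
  rw [chainSum, Finset.sum_range_succ, Function.update_self, hc n le_rfl]
  congr 1
  exact Finset.sum_congr rfl fun k hk => by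
    rw [hc k (by simp at hk; omega), hc (k + 1) (by simp at hk; omega)]

def chainSums (T : H → H) (x : H) : Set ℝ :=
  {r | ∃ n c, c 0 = 0 ∧ c n = x ∧ chainSum T n c = r}

noncomputable def rockafellarPotential (T : H → H) (x : H) : ℝ :=
  sSup (chainSums T x)

lemma chainSums_nonempty (x : H) : (chainSums T x).Nonempty :=
  ⟨_, 1, Function.update 0 1 x, rfl, Function.update_self .., chainSum_update_succ 0 0 x⟩

lemma le_inner_of_mem_chainSums (hT : CyclicallyMonotone T) {x : H} {r : ℝ}
    (hr : r ∈ chainSums T x) : r ≤ ⟪x, T x⟫ := by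
  obtain ⟨n, c, hc0, rfl, rfl⟩ := hr
  rcases Nat.eq_zero_or_pos n with rfl | hn
  · simp [chainSum, hc0]
  · have hcycle := hT (n + 1) (by omega) (Function.update c (n + 1) 0)
      (by rw [Function.update_self, Function.update_of_ne (by omega), hc0])
    rw [chainSum_update_succ, zero_sub, inner_neg_left] at hcycle
    linarith

lemma chainSums_bddAbove (hT : CyclicallyMonotone T) (x : H) : BddAbove (chainSums T x) :=
  ⟨_, fun _ hr => le_inner_of_mem_chainSums hT hr⟩

lemma rockafellarPotential_add_inner_le (hT : CyclicallyMonotone T) (x z : H) :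
    rockafellarPotential T x + ⟪z - x, T x⟫ ≤ rockafellarPotential T z := by
  rw [← le_sub_iff_add_le]
  refine csSup_le (chainSums_nonempty x) ?_
  rintro _ ⟨n, c, hc0, rfl, rfl⟩
  rw [le_sub_iff_add_le, ← chainSum_update_succ]
  exact le_csSup (chainSums_bddAbove hT z)
    ⟨n + 1, _, by rw [Function.update_of_ne (by omega), hc0], Function.update_self .., rfl⟩

end RockafellarPotential

section SmoothPotential

lemma inner_sub_map_sub_le_norm_sq (hne : ∀ x y : H, ‖T x - T y‖ ≤ ‖x - y‖) (x y : H) :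
    ⟪x - y, T x - T y⟫ ≤ ‖x - y‖ ^ 2 :=
  (real_inner_le_norm _ _).trans (by rw [sq]; gcongr; exact hne x y)

lemma le_add_inner_add_norm_sq
    (hne : ∀ x y : H, ‖T x - T y‖ ≤ ‖x - y‖) (hsub : ∀ x z, h x + ⟪z - x, T x⟫ ≤ h z)
    (x w : H) : h w ≤ h x + ⟪w - x, T x⟫ + ‖w - x‖ ^ 2 := by
  have hTw := hsub w x
  have hw := inner_sub_map_sub_le_norm_sq hne w x
  rw [← neg_sub, inner_neg_left] at hTw
  rw [inner_sub_right] at hw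
  linarith

lemma le_add_inner_add_mul_norm_sq_bisect (hne : ∀ x y : H, ‖T x - T y‖ ≤ ‖x - y‖) {c : ℝ}
    (hc : ∀ x w, h w ≤ h x + ⟪w - x, T x⟫ + c * ‖w - x‖ ^ 2) (x w : H) :
    h w ≤ h x + ⟪w - x, T x⟫ + (c / 2 + 1 / 4) * ‖w - x‖ ^ 2 := by
  set v : H := (2 : ℝ)⁻¹ • (w - x)
  set m : H := x + v
  have hmx : m - x = v := add_sub_cancel_left x v
  have hwm : w - m = v := by simp only [m, v]; module
  have hwx : w - x = (2 : ℝ) • v := by simp only [v]; module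
  have hv : ‖w - x‖ ^ 2 = 4 * ‖v‖ ^ 2 := by
    rw [hwx, norm_smul, mul_pow]; norm_num
  have hm := inner_sub_map_sub_le_norm_sq hne m x
  have h₁ := hc m w
  have h₂ := hc x m
  rw [hwm] at h₁
  rw [hmx] at h₂ hm
  rw [hv, hwx, real_inner_smul_left]
  rw [inner_sub_right] at hm
  linarith

lemma le_add_inner_add_norm_sq_div_two
    (hne : ∀ x y : H, ‖T x - T y‖ ≤ ‖x - y‖) (hsub : ∀ x z, h x + ⟪z - x, T x⟫ ≤ h z)
    (x w : H) : h w ≤ h x + ⟪w - x, T x⟫ + ‖w - x‖ ^ 2 / 2 := by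
  -- the constants `1, 3/4, 5/8, …` produced by halving are `1/2 + (1/2)^(n+1)`
  have hn : ∀ n : ℕ, ∀ x w,
      h w ≤ h x + ⟪w - x, T x⟫ + (1 / 2 + (1 / 2) ^ (n + 1)) * ‖w - x‖ ^ 2 := by
    intro n
    induction n with
    | zero => norm_num; exact le_add_inner_add_norm_sq hne hsub
    | succ n ih =>
      convert le_add_inner_add_mul_norm_sq_bisect hne ih using 4
      ring
  have hlim : Tendsto (fun n : ℕ ↦ h x + ⟪w - x, T x⟫ +
      (1 / 2 + (1 / 2) ^ (n + 1)) * ‖w - x‖ ^ 2) atTop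
      (𝓝 (h x + ⟪w - x, T x⟫ + (1 / 2 + 0) * ‖w - x‖ ^ 2)) := by
    have hpow : Tendsto (fun n : ℕ ↦ (1 / 2 : ℝ) ^ (n + 1)) atTop (𝓝 0) :=
      (tendsto_pow_atTop_nhds_zero_of_lt_one (by norm_num) (by norm_num)).comp
        (tendsto_add_atTop_nat 1)
    exact ((hpow.const_add _).mul_const _).const_add _
  have := ge_of_tendsto' hlim (fun n ↦ hn n x w)
  linarith

lemma add_inner_add_norm_sq_map_sub_le
    (hne : ∀ x y : H, ‖T x - T y‖ ≤ ‖x - y‖) (hsub : ∀ x z, h x + ⟪z - x, T x⟫ ≤ h z)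
    (x w : H) : h x + ⟪w - x, T x⟫ + ‖T w - T x‖ ^ 2 / 2 ≤ h w := by
  -- subgradient inequality at `x` and descent lemma at `w`, both towards `w - (T w - T x)`
  set d := T w - T x
  have hx := hsub x (w - d)
  have hw := le_add_inner_add_norm_sq_div_two hne hsub w (w - d)
  have hd : ‖d‖ ^ 2 = ⟪d, T w⟫ - ⟪d, T x⟫ := by
    rw [← inner_sub_right, real_inner_self_eq_norm_sq]
  rw [sub_sub_cancel_left, inner_neg_left, norm_neg] at hw
  rw [sub_right_comm, inner_sub_left] at hx
  linarith

end SmoothPotential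

section ProxPotential

/-- `h* - ‖·‖² / 2`, written as the supremum of the affine minorants at the points `T w` that
the `1`-strong convexity of `h*` (dual to the co-coercive inequality for `h`) provides. -/
noncomputable def proxPotential (T : H → H) (h : H → ℝ) (y : H) : EReal :=
  ⨆ w, ((⟪w - T w, y⟫ + ‖T w‖ ^ 2 / 2 - h w : ℝ) : EReal)

lemma le_proxPotential (w y : H) :
    ((⟪w - T w, y⟫ + ‖T w‖ ^ 2 / 2 - h w : ℝ) : EReal) ≤ proxPotential T h y :=
  le_iSup (fun w ↦ ((⟪w - T w, y⟫ + ‖T w‖ ^ 2 / 2 - h w : ℝ) : EReal)) w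

lemma proxPotential_map
    (hco : ∀ x w, h x + ⟪w - x, T x⟫ + ‖T w - T x‖ ^ 2 / 2 ≤ h w) (x : H) :
    proxPotential T h (T x) = ((⟪x, T x⟫ - ‖T x‖ ^ 2 / 2 - h x : ℝ) : EReal) := by
  refine le_antisymm (iSup_le fun w ↦ EReal.coe_le_coe_iff.mpr ?_) ?_
  · have := hco x w
    rw [norm_sub_sq_real, inner_sub_left] at this
    rw [inner_sub_left]
    linarith [real_inner_comm (T w) (T x)]
  · convert le_proxPotential x (T x) using 2
    rw [inner_sub_left, real_inner_self_eq_norm_sq]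
    ring

lemma properLscConvex_proxPotential
    (hco : ∀ x w, h x + ⟪w - x, T x⟫ + ‖T w - T x‖ ^ 2 / 2 ≤ h w) :
    ProperLscConvex (proxPotential T h) := by
  refine ⟨⟨T 0, by rw [proxPotential_map hco]; exact EReal.coe_ne_top _⟩,
    fun y ↦ ((EReal.bot_lt_coe _).trans_le (le_proxPotential 0 y)).ne', ?_, ?_⟩
  · exact lowerSemicontinuous_iSup fun w ↦ Continuous.lowerSemicontinuous <|
    continuous_coe_real_ereal.comp (by fun_prop)
  · intro x y t ht₀ ht₁
    refine iSup_le fun w ↦ ?_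
    have hcomb : ⟪w - T w, t • x + (1 - t) • y⟫ + ‖T w‖ ^ 2 / 2 - h w =
        t * (⟪w - T w, x⟫ + ‖T w‖ ^ 2 / 2 - h w) +
          (1 - t) * (⟪w - T w, y⟫ + ‖T w‖ ^ 2 / 2 - h w) := by
      simp only [inner_add_right, real_inner_smul_right]
      ring
    rw [hcomb, EReal.coe_add, EReal.coe_mul, EReal.coe_mul]
    gcongr <;> exact le_proxPotential w _

lemma proxPotential_map_add_norm_sq_le
    (hco : ∀ x w, h x + ⟪w - x, T x⟫ + ‖T w - T x‖ ^ 2 / 2 ≤ h w) (x y : H) :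
    proxPotential T h (T x) + ((‖x - T x‖ ^ 2 / 2 : ℝ) : EReal) +
        ((‖y - T x‖ ^ 2 / 2 : ℝ) : EReal) ≤ proxPotential T h y + ((‖x - y‖ ^ 2 / 2 : ℝ) : EReal) := by
  refine le_trans (le_of_eq ?_) (add_le_add (le_proxPotential x y) le_rfl)
  rw [proxPotential_map hco, ← EReal.coe_add, ← EReal.coe_add, ← EReal.coe_add,
    EReal.coe_eq_coe_iff, inner_sub_left, norm_sub_sq_real x y, norm_sub_sq_real x (T x),
    norm_sub_sq_real y (T x), real_inner_comm y (T x)]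
  ring

end ProxPotential

end

theorem nonexpansive_cyclically_monotone_is_prox_general
    {H : Type*} [NormedAddCommGroup H] [InnerProductSpace ℝ H]
    (T : H → H)
    (hne : ∀ x y : H, ‖T x - T y‖ ≤ ‖x - y‖)
    (hcyc : ∀ n : ℕ, 2 ≤ n → ∀ x : ℕ → H, x n = x 0 →
      ∑ k ∈ Finset.range n, ⟪x (k + 1) - x k, T (x k)⟫ ≤ 0) :
    ∃ f : H → EReal, ProperLscConvex f ∧
      ∀ x y : H,
        (f (T x) + ((‖x - T x‖ ^ 2 / 2 : ℝ) : EReal)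
          ≤ f y + ((‖x - y‖ ^ 2 / 2 : ℝ) : EReal)) ∧
        (f y + ((‖x - y‖ ^ 2 / 2 : ℝ) : EReal)
            = f (T x) + ((‖x - T x‖ ^ 2 / 2 : ℝ) : EReal) → y = T x) := by
  have hco := add_inner_add_norm_sq_map_sub_le hne (rockafellarPotential_add_inner_le hcyc)
  refine ⟨proxPotential T _, properLscConvex_proxPotential hco, fun x y ↦ ?_⟩
  have hle := proxPotential_map_add_norm_sq_le hco x y
  refine ⟨le_trans (le_add_of_nonneg_right (EReal.coe_nonneg.mpr (by positivity))) hle,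
    fun heq ↦ ?_⟩
  rw [heq, proxPotential_map hco, ← EReal.coe_add, ← EReal.coe_add,
    EReal.coe_le_coe_iff] at hle
  have hsq : ‖y - T x‖ ^ 2 = 0 := le_antisymm (by linarith) (sq_nonneg _)
  rwa [sq_eq_zero_iff, norm_eq_zero, sub_eq_zero] at hsq

theorem nonexpansive_cyclically_monotone_is_prox
    {H : Type*} [NormedAddCommGroup H] [InnerProductSpace ℝ H] [CompleteSpace H]
    (T : H → H)
    (hne : ∀ x y : H, ‖T x - T y‖ ≤ ‖x - y‖)
    (hcyc : ∀ n : ℕ, 2 ≤ n → ∀ x : ℕ → H, x n = x 0 →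
      ∑ k ∈ Finset.range n, ⟪x (k + 1) - x k, T (x k)⟫ ≤ 0) :
    ∃ f : H → EReal, ProperLscConvex f ∧
      ∀ x y : H,
        (f (T x) + ((‖x - T x‖ ^ 2 / 2 : ℝ) : EReal)
          ≤ f y + ((‖x - y‖ ^ 2 / 2 : ℝ) : EReal)) ∧
        (f y + ((‖x - y‖ ^ 2 / 2 : ℝ) : EReal)
            = f (T x) + ((‖x - T x‖ ^ 2 / 2 : ℝ) : EReal) → y = T x) :=
  nonexpansive_cyclically_monotone_is_prox_general T hne hcyc
end

section
/- Let H be a real Hilbert space and T : H → H. Then there exists a nonempty closed convex subset C of H such that T = proj_C (the metric projection onto C) if and only if for all x, y ∈ H, ⟨T y − T x, x − T x⟩ ≤ 0. -/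
open RealInnerProductSpace

section

variable {E : Type*} [NormedAddCommGroup E] [InnerProductSpace ℝ E]

theorem convex_setOf_inner_sub_nonpos (p v : E) : Convex ℝ {c : E | ⟪c - p, v⟫ ≤ 0} := by
  simp only [inner_sub_left, sub_nonpos]
  exact convex_halfSpace_le ((innerₗ E).flip v).isLinear _

theorem isClosed_setOf_inner_sub_nonpos (p v : E) : IsClosed {c : E | ⟪c - p, v⟫ ≤ 0} :=
  isClosed_le (by fun_prop) continuous_const

theorem closedConvexHull_subset_setOf_inner_sub_nonpos {s : Set E} {p v : E}
    (h : ∀ y ∈ s, ⟪y - p, v⟫ ≤ 0) : closedConvexHull ℝ s ⊆ {c : E | ⟪c - p, v⟫ ≤ 0} :=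
  closedConvexHull_min h (convex_setOf_inner_sub_nonpos p v) (isClosed_setOf_inner_sub_nonpos p v)

end

theorem projection_characterization_general
    {H : Type*} [NormedAddCommGroup H] [InnerProductSpace ℝ H]
    (T : H → H) :
    (∃ C : Set H, C.Nonempty ∧ IsClosed C ∧ Convex ℝ C ∧
        ∀ x : H, T x ∈ C ∧ ∀ c ∈ C, ⟪c - T x, x - T x⟫ ≤ 0) ↔
      ∀ x y : H, ⟪T y - T x, x - T x⟫ ≤ 0 := by
  constructor
  · rintro ⟨C, -, -, -, hC⟩ x y
    exact (hC x).2 _ (hC y).1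
  · intro h
    -- Any admissible `C` contains `range T`; take the smallest closed convex such set.
    refine ⟨closedConvexHull ℝ (Set.range T), (Set.range_nonempty T).mono subset_closedConvexHull,
      isClosed_closedConvexHull, convex_closedConvexHull,
      fun x => ⟨subset_closedConvexHull ⟨x, rfl⟩, fun c hc => ?_⟩⟩
    exact closedConvexHull_subset_setOf_inner_sub_nonpos (Set.forall_mem_range.2 (h x)) hc

theorem projection_characterization
    {H : Type*} [NormedAddCommGroup H] [InnerProductSpace ℝ H] [CompleteSpace H]
    (T : H → H) :
    (∃ C : Set H, C.Nonempty ∧ IsClosed C ∧ Convex ℝ C ∧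
        ∀ x : H, T x ∈ C ∧ ∀ c ∈ C, ⟪c - T x, x - T x⟫ ≤ 0) ↔
      ∀ x y : H, ⟪T y - T x, x - T x⟫ ≤ 0 :=
  projection_characterization_general T
end

section
/- Let (Ω, F, μ) be a σ-finite measure space, H a separable real Hilbert space, and for each ω ∈ Ω let f_ω : H → ℝ ∪ {+∞} be proper lsc convex. Suppose: (i) for every x ∈ L²(Ω, μ; H) the function ω ↦ f_ω(x(ω)) is measurable; (ii) there is r ∈ L²(Ω, μ; H) with ω ↦ f_ω(r(ω)) integrable; (iii) there exist s* ∈ L²(Ω, μ; H) and integrable θ : Ω → ℝ with f_ω(u) ≥ ⟨u, s*(ω)⟩ + θ(ω) for all u ∈ H and μ-a.e. ω. Then the integral functional f : L²(Ω, μ; H) → ℝ ∪ {+∞}, f(x) = ∫_Ω f_ω(x(ω)) dμ(ω), is proper, convex, and lower semicontinuous (for the L² norm topology). -/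
open MeasureTheory RealInnerProductSpace

/-- The integral functional `x ↦ ∫ f_ω(x(ω)) dμ(ω)`, with the convention that the
integral is `+∞` unless the integrand is a.e. finite and integrable. -/
noncomputable def intFun {Ω H : Type*} [MeasurableSpace Ω] (μ : Measure Ω)
    [NormedAddCommGroup H] [InnerProductSpace ℝ H]
    (f : Ω → H → EReal) (x : Ω → H) : EReal :=
  open scoped Classical in
  if (∀ᵐ ω ∂μ, f ω (x ω) ≠ ⊤) ∧ Integrable (fun ω => (f ω (x ω)).toReal) μ
  then ((∫ ω, (f ω (x ω)).toReal ∂μ : ℝ) : EReal) else ⊤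

open Filter Topology
open scoped ENNReal

/-!
Convexity is the pointwise convexity inequality, integrated. The affine minorant
`l ω = ⟪u, s ω⟫ + θ ω` bounds every integrand from below by an integrable function; this makes
the integral monotone and splits it as `∫ l + ∫⁻ (f - l)`. For lower semicontinuity take
`uₙ → x` in `L²` with values at most `C`: along an a.e. convergent subsequence the minorants
converge a.e. and in integral (by continuity of `⟪·, s⟫`), while `f ω (x ω) ≤ liminf f ω (uₙ ω)`
by lower semicontinuity of `f ω`; Fatou's lemma applied to the nonnegative parts `f - l` then
bounds the value at `x` by `C`.
-/

namespace EReal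

lemma toENNReal_sub_coe {x : EReal} (hx_top : x ≠ ⊤) (hx_bot : x ≠ ⊥) (r : ℝ) :
    (x - r).toENNReal = ENNReal.ofReal (x.toReal - r) := by
  lift x to ℝ using ⟨hx_top, hx_bot⟩
  rw [← EReal.coe_sub, EReal.toENNReal_of_ne_top (EReal.coe_ne_top _), toReal_coe, toReal_coe]

lemma toENNReal_sub_le_liminf {ι : Type*} {F : Filter ι} [F.NeBot] {x : EReal} {u : ι → EReal}
    {c : ℝ} {v : ι → ℝ} (hx : x ≤ liminf u F) (hv : Tendsto v F (𝓝 c)) :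
    (x - c).toENNReal ≤ liminf (fun i => (u i - v i).toENNReal) F := by
  have hneg : liminf (fun i => ((-v i : ℝ) : EReal)) F = ((-c : ℝ) : EReal) :=
    (continuous_coe_real_ereal.tendsto _ |>.comp hv.neg).liminf_eq
  have hsub : x - c ≤ liminf (fun i => u i - v i) F :=
    calc x - c = x + ((-c : ℝ) : EReal) := by rw [sub_eq_add_neg, coe_neg]
      _ ≤ liminf u F + liminf (fun i => ((-v i : ℝ) : EReal)) F := by rw [hneg]; gcongr
      _ ≤ liminf (fun i => u i - v i) F := by
        simpa only [Pi.add_def, coe_neg, ← sub_eq_add_neg] using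
          le_liminf_add (u := u) (v := fun i => ((-v i : ℝ) : EReal))
  calc (x - c).toENNReal ≤ (liminf (fun i => u i - v i) F).toENNReal := toENNReal_le_toENNReal hsub
    _ = liminf (fun i => (u i - v i).toENNReal) F :=
      Monotone.map_liminf_of_continuousAt (fun _ _ => toENNReal_le_toENNReal) _
        continuous_toENNReal.continuousAt

lemma le_toReal_of_coe_le {x : EReal} {a : ℝ} (h : (a : EReal) ≤ x) (hx : x ≠ ⊤) :
    a ≤ x.toReal := by
  simpa using toReal_le_toReal h (coe_ne_bot a) hx

end EReal

section ERealIntegral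

variable {Ω : Type*} [MeasurableSpace Ω] {μ : Measure Ω} {φ ψ : Ω → EReal} {l : Ω → ℝ}

/-- Reducible, so that `intFun μ f x` is definitionally `erealIntegral μ (fun ω => f ω (x ω))`. -/
abbrev IntegrableEReal (φ : Ω → EReal) (μ : Measure Ω) : Prop :=
  (∀ᵐ ω ∂μ, φ ω ≠ ⊤) ∧ Integrable (fun ω => (φ ω).toReal) μ

noncomputable def erealIntegral (μ : Measure Ω) (φ : Ω → EReal) : EReal :=
  open scoped Classical in
  if IntegrableEReal φ μ then ((∫ ω, (φ ω).toReal ∂μ : ℝ) : EReal) else ⊤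

lemma erealIntegral_of_integrableEReal (h : IntegrableEReal φ μ) :
    erealIntegral μ φ = ((∫ ω, (φ ω).toReal ∂μ : ℝ) : EReal) :=
  if_pos h

lemma erealIntegral_of_not_integrableEReal (h : ¬IntegrableEReal φ μ) :
    erealIntegral μ φ = ⊤ :=
  if_neg h

lemma erealIntegral_ne_bot (μ : Measure Ω) (φ : Ω → EReal) : erealIntegral μ φ ≠ ⊥ := by
  unfold erealIntegral
  split_ifs <;> simp

lemma erealIntegral_congr_ae (h : φ =ᵐ[μ] ψ) : erealIntegral μ φ = erealIntegral μ ψ := by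
  have h_toReal : (fun ω => (φ ω).toReal) =ᵐ[μ] fun ω => (ψ ω).toReal :=
    h.mono fun ω hω => congrArg EReal.toReal hω
  have h_iff : IntegrableEReal φ μ ↔ IntegrableEReal ψ μ :=
    and_congr (eventually_congr (h.mono fun ω hω => by rw [hω])) (integrable_congr h_toReal)
  by_cases hφ : IntegrableEReal φ μ
  · rw [erealIntegral_of_integrableEReal hφ, erealIntegral_of_integrableEReal (h_iff.1 hφ),
      integral_congr_ae h_toReal]
  · rw [erealIntegral_of_not_integrableEReal hφ,
      erealIntegral_of_not_integrableEReal (mt h_iff.2 hφ)]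

lemma erealIntegral_coe {g : Ω → ℝ} (hg : Integrable g μ) :
    erealIntegral μ (fun ω => (g ω : EReal)) = ((∫ ω, g ω ∂μ : ℝ) : EReal) := by
  simp only [erealIntegral_of_integrableEReal (φ := fun ω => (g ω : EReal))
    ⟨ae_of_all _ fun ω => EReal.coe_ne_top _, by simpa only [EReal.toReal_coe] using hg⟩,
    EReal.toReal_coe]

lemma erealIntegral_mono_of_le (hl : Integrable l μ) (hlφ : ∀ᵐ ω ∂μ, (l ω : EReal) ≤ φ ω)
    (hφ : AEMeasurable φ μ) (hφψ : φ ≤ᵐ[μ] ψ) : erealIntegral μ φ ≤ erealIntegral μ ψ := by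
  by_cases hψ : IntegrableEReal ψ μ
  · have hφ_top : ∀ᵐ ω ∂μ, φ ω ≠ ⊤ := by
      filter_upwards [hψ.1, hφψ] with ω h_top h_le using ne_top_of_le_ne_top h_top h_le
    have h_lower : l ≤ᵐ[μ] fun ω => (φ ω).toReal := by
      filter_upwards [hlφ, hφ_top] with ω h_le h_top using EReal.le_toReal_of_coe_le h_le h_top
    have h_upper : (fun ω => (φ ω).toReal) ≤ᵐ[μ] fun ω => (ψ ω).toReal := by
      filter_upwards [hlφ, hφψ, hψ.1] with ω h_low h_le h_top
      exact EReal.toReal_le_toReal h_le (ne_bot_of_le_ne_bot (EReal.coe_ne_bot _) h_low) h_top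
    have hφ_int : Integrable (fun ω => (φ ω).toReal) μ :=
      integrable_of_le_of_le hφ.ereal_toReal.aestronglyMeasurable h_lower h_upper hl hψ.2
    rw [erealIntegral_of_integrableEReal ⟨hφ_top, hφ_int⟩, erealIntegral_of_integrableEReal hψ]
    exact EReal.coe_le_coe_iff.2 (integral_mono_ae hφ_int hψ.2 h_upper)
  · rw [erealIntegral_of_not_integrableEReal hψ]
    exact le_top

lemma erealIntegral_mul_add_mul_le (hφ : ∀ᵐ ω ∂μ, φ ω ≠ ⊥) (hψ : ∀ᵐ ω ∂μ, ψ ω ≠ ⊥) {s t : ℝ}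
    (hs : 0 ≤ s) (ht : 0 ≤ t) (hst : s + t = 1) :
    erealIntegral μ (fun ω => s * φ ω + t * ψ ω) ≤
      s * erealIntegral μ φ + t * erealIntegral μ ψ := by
  by_cases h_int : IntegrableEReal φ μ ∧ IntegrableEReal ψ μ
  · obtain ⟨hφ_int, hψ_int⟩ := h_int
    have h_real : (fun ω => s * φ ω + t * ψ ω) =ᵐ[μ]
        fun ω => ((s * (φ ω).toReal + t * (ψ ω).toReal : ℝ) : EReal) := by
      filter_upwards [hφ_int.1, hψ_int.1, hφ, hψ] with ω hφ_top hψ_top hφ_bot hψ_bot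
      lift φ ω to ℝ using ⟨hφ_top, hφ_bot⟩ with a
      lift ψ ω to ℝ using ⟨hψ_top, hψ_bot⟩ with b
      norm_cast
    rw [erealIntegral_congr_ae h_real,
      erealIntegral_coe (g := fun ω => s * (φ ω).toReal + t * (ψ ω).toReal)
        ((hφ_int.2.const_mul s).add (hψ_int.2.const_mul t)),
      integral_add (hφ_int.2.const_mul s) (hψ_int.2.const_mul t), integral_const_mul,
      integral_const_mul, erealIntegral_of_integrableEReal hφ_int,
      erealIntegral_of_integrableEReal hψ_int]
    norm_cast
  wlog hφ_int : ¬IntegrableEReal φ μ generalizing φ ψ s t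
  · have h := this hψ hφ ht hs (by linarith) (by tauto) (by tauto)
    simpa only [add_comm] using h
  rw [erealIntegral_of_not_integrableEReal hφ_int]
  rcases hs.eq_or_lt with rfl | hs_pos
  · obtain rfl : t = 1 := by linarith
    simp
  · have h_ne_bot : (t : EReal) * erealIntegral μ ψ ≠ ⊥ :=
      (EReal.mul_ne_bot _ _).2 ⟨.inl (EReal.coe_ne_bot t), .inr (erealIntegral_ne_bot μ ψ),
        .inl (EReal.coe_ne_top t), .inl (EReal.coe_nonneg.2 ht)⟩
    rw [EReal.coe_mul_top_of_pos hs_pos, EReal.top_add_of_ne_bot h_ne_bot]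
    exact le_top

lemma integrableEReal_of_lintegral_ne_top (hl : Integrable l μ) (hφ : AEMeasurable φ μ)
    (hlφ : ∀ᵐ ω ∂μ, (l ω : EReal) ≤ φ ω) (h : ∫⁻ ω, (φ ω - l ω).toENNReal ∂μ ≠ ∞) :
    IntegrableEReal φ μ := by
  have h_meas : AEMeasurable (fun ω => (φ ω - l ω).toENNReal) μ :=
    (hφ.sub hl.aemeasurable.coe_real_ereal).ereal_toENNReal
  have hφ_top : ∀ᵐ ω ∂μ, φ ω ≠ ⊤ := by
    filter_upwards [ae_lt_top' h_meas h] with ω hω hφ_top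
    simp [hφ_top] at hω
  have h_toReal : (fun ω => (φ ω - l ω).toENNReal.toReal) =ᵐ[μ] fun ω => (φ ω).toReal - l ω := by
    filter_upwards [hφ_top, hlφ] with ω h_top h_le
    rw [EReal.toENNReal_sub_coe h_top (ne_bot_of_le_ne_bot (EReal.coe_ne_bot _) h_le),
      ENNReal.toReal_ofReal (sub_nonneg.2 (EReal.le_toReal_of_coe_le h_le h_top))]
  refine ⟨hφ_top, ?_⟩
  exact (((integrable_toReal_of_lintegral_ne_top h_meas h).congr h_toReal).add hl).congr
    (ae_of_all _ fun ω => sub_add_cancel _ _)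

/-- Any integrable minorant `l` splits the integral as `∫ l + ∫⁻ (φ - l)`. -/
lemma erealIntegral_le_coe_iff (hl : Integrable l μ) (hφ : AEMeasurable φ μ)
    (hlφ : ∀ᵐ ω ∂μ, (l ω : EReal) ≤ φ ω) (C : ℝ) :
    erealIntegral μ φ ≤ C ↔ ∫ ω, l ω ∂μ ≤ C ∧
      ∫⁻ ω, (φ ω - l ω).toENNReal ∂μ ≤ ENNReal.ofReal (C - ∫ ω, l ω ∂μ) := by
  by_cases hφ_int : IntegrableEReal φ μ
  · have h_lower : l ≤ᵐ[μ] fun ω => (φ ω).toReal := by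
      filter_upwards [hlφ, hφ_int.1] with ω h_le h_top using EReal.le_toReal_of_coe_le h_le h_top
    have h_sub : (fun ω => (φ ω - l ω).toENNReal) =ᵐ[μ]
        fun ω => ENNReal.ofReal ((φ ω).toReal - l ω) := by
      filter_upwards [hlφ, hφ_int.1] with ω h_le h_top
      exact EReal.toENNReal_sub_coe h_top (ne_bot_of_le_ne_bot (EReal.coe_ne_bot _) h_le) _
    have h_int_le : ∫ ω, l ω ∂μ ≤ ∫ ω, (φ ω).toReal ∂μ := integral_mono_ae hl hφ_int.2 h_lower
    rw [erealIntegral_of_integrableEReal hφ_int, EReal.coe_le_coe_iff, lintegral_congr_ae h_sub,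
      ← ofReal_integral_eq_lintegral_ofReal (f := fun ω => (φ ω).toReal - l ω) (hφ_int.2.sub hl)
        (h_lower.mono fun _ h => sub_nonneg.2 h), integral_sub hφ_int.2 hl]
    constructor
    · intro h
      exact ⟨h_int_le.trans h, ENNReal.ofReal_le_ofReal (by linarith)⟩
    · rintro ⟨h_l, h⟩
      rw [ENNReal.ofReal_le_ofReal_iff (by linarith)] at h
      linarith
  · rw [erealIntegral_of_not_integrableEReal hφ_int]
    refine iff_of_false (by simp) fun ⟨_, h⟩ => hφ_int ?_
    exact integrableEReal_of_lintegral_ne_top hl hφ hlφ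
      (ne_top_of_le_ne_top ENNReal.ofReal_ne_top h)

theorem erealIntegral_le_of_le_liminf {φ : ℕ → Ω → EReal} {φ₀ : Ω → EReal} {l : ℕ → Ω → ℝ}
    {l₀ : Ω → ℝ} (hl : ∀ n, Integrable (l n) μ) (hl₀ : Integrable l₀ μ)
    (hφ : ∀ n, AEMeasurable (φ n) μ) (hφ₀ : AEMeasurable φ₀ μ)
    (hlφ : ∀ n, ∀ᵐ ω ∂μ, (l n ω : EReal) ≤ φ n ω) (hlφ₀ : ∀ᵐ ω ∂μ, (l₀ ω : EReal) ≤ φ₀ ω)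
    (hl_ae : ∀ᵐ ω ∂μ, Tendsto (fun n => l n ω) atTop (𝓝 (l₀ ω)))
    (hl_int : Tendsto (fun n => ∫ ω, l n ω ∂μ) atTop (𝓝 (∫ ω, l₀ ω ∂μ)))
    (hφ_liminf : ∀ᵐ ω ∂μ, φ₀ ω ≤ liminf (fun n => φ n ω) atTop) {C : ℝ}
    (hC : ∀ n, erealIntegral μ (φ n) ≤ C) : erealIntegral μ φ₀ ≤ C := by
  have hC' n := (erealIntegral_le_coe_iff (hl n) (hφ n) (hlφ n) C).1 (hC n)
  refine (erealIntegral_le_coe_iff hl₀ hφ₀ hlφ₀ C).2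
    ⟨le_of_tendsto' hl_int fun n => (hC' n).1, ?_⟩
  calc ∫⁻ ω, (φ₀ ω - l₀ ω).toENNReal ∂μ
      ≤ ∫⁻ ω, liminf (fun n => (φ n ω - l n ω).toENNReal) atTop ∂μ := by
        refine lintegral_mono_ae ?_
        filter_upwards [hφ_liminf, hl_ae] with ω h_liminf h_lim
        exact EReal.toENNReal_sub_le_liminf h_liminf h_lim
    _ ≤ liminf (fun n => ∫⁻ ω, (φ n ω - l n ω).toENNReal ∂μ) atTop :=
        lintegral_liminf_le' fun n =>
          ((hφ n).sub (hl n).aemeasurable.coe_real_ereal).ereal_toENNReal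
    _ ≤ liminf (fun n => ENNReal.ofReal (C - ∫ ω, l n ω ∂μ)) atTop :=
        liminf_le_liminf (Eventually.of_forall fun n => (hC' n).2)
    _ = ENNReal.ofReal (C - ∫ ω, l₀ ω ∂μ) :=
        (ENNReal.tendsto_ofReal (tendsto_const_nhds.sub hl_int)).liminf_eq

end ERealIntegral

section L2

variable {Ω H : Type*} [MeasurableSpace Ω] {μ : Measure Ω} [NormedAddCommGroup H]
  [InnerProductSpace ℝ H] {f : Ω → H → EReal} {s : Lp H 2 μ} {θ : Ω → ℝ}

lemma intFun_eq_erealIntegral (x : Ω → H) :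
    intFun μ f x = erealIntegral μ (fun ω => f ω (x ω)) :=
  rfl

lemma intFun_congr_ae {x y : Ω → H} (h : x =ᵐ[μ] y) : intFun μ f x = intFun μ f y :=
  erealIntegral_congr_ae (h.mono fun ω hω => congrArg (f ω) hω)

lemma integrable_inner_add (hθ : Integrable θ μ) (x : Lp H 2 μ) :
    Integrable (fun ω => ⟪x ω, s ω⟫ + θ ω) μ :=
  (L2.integrable_inner x s).add hθ

theorem intFun_le_of_tendsto (hf : ∀ ω, LowerSemicontinuous (f ω))
    (hmeas : ∀ x : Lp H 2 μ, AEMeasurable (fun ω => f ω (x ω)) μ) (hθ : Integrable θ μ)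
    (hbound : ∀ᵐ ω ∂μ, ∀ u : H, ((⟪u, s ω⟫ + θ ω : ℝ) : EReal) ≤ f ω u)
    {u : ℕ → Lp H 2 μ} {x : Lp H 2 μ} (hu : Tendsto u atTop (𝓝 x)) {C : ℝ}
    (hC : ∀ n, intFun μ f (u n) ≤ C) : intFun μ f x ≤ C := by
  obtain ⟨k, hk, hk_ae⟩ := (tendstoInMeasure_of_tendsto_Lp hu).exists_seq_tendsto_ae
  have hlφ (y : Lp H 2 μ) : ∀ᵐ ω ∂μ, ((⟪y ω, s ω⟫ + θ ω : ℝ) : EReal) ≤ f ω (y ω) :=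
    hbound.mono fun ω h => h _
  refine erealIntegral_le_of_le_liminf (l := fun n ω => ⟪u (k n) ω, s ω⟫ + θ ω)
    (fun n => integrable_inner_add hθ _) (integrable_inner_add hθ x) (fun n => hmeas _) (hmeas x)
    (fun n => hlφ _) (hlφ x) ?_ ?_ ?_ fun n => hC (k n)
  · filter_upwards [hk_ae] with ω h_lim
    exact (h_lim.inner tendsto_const_nhds).add_const _
  · simp only [integral_add (L2.integrable_inner _ s) hθ, ← L2.inner_def]
    exact ((hu.comp hk.tendsto_atTop).inner tendsto_const_nhds).add_const _
  · filter_upwards [hk_ae] with ω h_lim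
    exact ((hf ω).le_liminf _).trans (h_lim.liminf_le_liminf_comp (u := f ω))

theorem lowerSemicontinuous_intFun (hf : ∀ ω, LowerSemicontinuous (f ω))
    (hmeas : ∀ x : Lp H 2 μ, AEMeasurable (fun ω => f ω (x ω)) μ) (hθ : Integrable θ μ)
    (hbound : ∀ᵐ ω ∂μ, ∀ u : H, ((⟪u, s ω⟫ + θ ω : ℝ) : EReal) ≤ f ω u) :
    LowerSemicontinuous (fun x : Lp H 2 μ => intFun μ f x) := by
  refine lowerSemicontinuous_iff_isClosed_preimage.2 fun C => ?_
  induction C using EReal.rec with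
  | bot =>
    convert isClosed_empty
    exact Set.eq_empty_of_forall_notMem fun x hx => erealIntegral_ne_bot _ _ (le_bot_iff.1 hx)
  | coe C =>
    exact IsSeqClosed.isClosed fun u x hu_le hu =>
      intFun_le_of_tendsto hf hmeas hθ hbound hu hu_le
  | top => simp

theorem intFun_smul_add_smul_le
    (hf : ∀ ω, ∀ x y : H, ∀ t : ℝ, 0 ≤ t → t ≤ 1 →
      f ω (t • x + (1 - t) • y) ≤ (t : EReal) * f ω x + ((1 - t : ℝ) : EReal) * f ω y)
    (hf_bot : ∀ ω u, f ω u ≠ ⊥)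
    (hmeas : ∀ x : Lp H 2 μ, AEMeasurable (fun ω => f ω (x ω)) μ) (hθ : Integrable θ μ)
    (hbound : ∀ᵐ ω ∂μ, ∀ u : H, ((⟪u, s ω⟫ + θ ω : ℝ) : EReal) ≤ f ω u)
    (x y : Lp H 2 μ) {t : ℝ} (ht₀ : 0 ≤ t) (ht₁ : t ≤ 1) :
    intFun μ f (t • x + (1 - t) • y) ≤
      (t : EReal) * intFun μ f x + ((1 - t : ℝ) : EReal) * intFun μ f y := by
  have hz : ⇑(t • x + (1 - t) • y) =ᵐ[μ] fun ω => t • x ω + (1 - t) • y ω := by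
    filter_upwards [Lp.coeFn_add (t • x) ((1 - t) • y), Lp.coeFn_smul t x,
      Lp.coeFn_smul (1 - t) y] with ω h_add h_smul_x h_smul_y
    simp only [h_add, Pi.add_apply, h_smul_x, h_smul_y, Pi.smul_apply]
  calc intFun μ f (t • x + (1 - t) • y)
      = intFun μ f ⇑(t • x + (1 - t) • y) := (intFun_congr_ae hz).symm
    _ ≤ erealIntegral μ (fun ω => t * f ω (x ω) + (1 - t : ℝ) * f ω (y ω)) := by
        refine erealIntegral_mono_of_le (integrable_inner_add hθ _)
          (hbound.mono fun ω h => h _) (hmeas _) ?_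
        filter_upwards [hz] with ω hω
        rw [hω]
        exact hf ω _ _ t ht₀ ht₁
    _ ≤ _ := erealIntegral_mul_add_mul_le (ae_of_all _ fun ω => hf_bot ω _)
        (ae_of_all _ fun ω => hf_bot ω _) ht₀ (by linarith) (by ring)

end L2

theorem integral_functional_proper_convex_lsc_general
    {Ω H : Type*} [MeasurableSpace Ω] {μ : Measure Ω}
    [NormedAddCommGroup H] [InnerProductSpace ℝ H]
    (f : Ω → H → EReal) (hf : ∀ ω, ProperLscConvex (f ω))
    (hmeas : ∀ x : Ω → H, MemLp x 2 μ → AEMeasurable (fun ω => f ω (x ω)) μ)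
    (hr : ∃ r : Ω → H, MemLp r 2 μ ∧ (∀ᵐ ω ∂μ, f ω (r ω) ≠ ⊤) ∧
      Integrable (fun ω => (f ω (r ω)).toReal) μ)
    (hmin : ∃ s : Ω → H, MemLp s 2 μ ∧ ∃ θ : Ω → ℝ, Integrable θ μ ∧
      ∀ᵐ ω ∂μ, ∀ u : H, ((⟪u, s ω⟫ + θ ω : ℝ) : EReal) ≤ f ω u) :
    (∃ x : Lp H 2 μ, intFun μ f x ≠ ⊤) ∧
      (∀ x : Lp H 2 μ, intFun μ f x ≠ ⊥) ∧
      LowerSemicontinuous (fun x : Lp H 2 μ => intFun μ f x) ∧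
      ∀ x y : Lp H 2 μ, ∀ t : ℝ, 0 ≤ t → t ≤ 1 →
        intFun μ f (t • x + (1 - t) • y) ≤
          (t : EReal) * intFun μ f x + ((1 - t : ℝ) : EReal) * intFun μ f y := by
  obtain ⟨r, hr, hr_top, hr_int⟩ := hr
  obtain ⟨s, hs, θ, hθ, hbound⟩ := hmin
  have hbound' : ∀ᵐ ω ∂μ, ∀ u : H, ((⟪u, hs.toLp s ω⟫ + θ ω : ℝ) : EReal) ≤ f ω u := by
    filter_upwards [hbound, hs.coeFn_toLp] with ω h hω
    rwa [hω]
  have hmeas' (x : Lp H 2 μ) : AEMeasurable (fun ω => f ω (x ω)) μ := hmeas x (Lp.memLp x)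
  refine ⟨⟨hr.toLp r, ?_⟩, fun x => erealIntegral_ne_bot _ _,
    lowerSemicontinuous_intFun (fun ω => (hf ω).2.2.1) hmeas' hθ hbound',
    fun x y t ht₀ ht₁ => intFun_smul_add_smul_le (fun ω => (hf ω).2.2.2) (fun ω => (hf ω).2.1)
      hmeas' hθ hbound' x y ht₀ ht₁⟩
  rw [intFun_congr_ae hr.coeFn_toLp, intFun_eq_erealIntegral,
    erealIntegral_of_integrableEReal ⟨hr_top, hr_int⟩]
  exact EReal.coe_ne_top _

theorem integral_functional_proper_convex_lsc
    {Ω H : Type*} [MeasurableSpace Ω] {μ : Measure Ω} [SigmaFinite μ]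
    [NormedAddCommGroup H] [InnerProductSpace ℝ H] [CompleteSpace H]
    [SecondCountableTopology H]
    (f : Ω → H → EReal) (hf : ∀ ω, ProperLscConvex (f ω))
    (hmeas : ∀ x : Ω → H, MemLp x 2 μ → AEMeasurable (fun ω => f ω (x ω)) μ)
    (hr : ∃ r : Ω → H, MemLp r 2 μ ∧ (∀ᵐ ω ∂μ, f ω (r ω) ≠ ⊤) ∧
      Integrable (fun ω => (f ω (r ω)).toReal) μ)
    (hmin : ∃ s : Ω → H, MemLp s 2 μ ∧ ∃ θ : Ω → ℝ, Integrable θ μ ∧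
      ∀ᵐ ω ∂μ, ∀ u : H, ((⟪u, s ω⟫ + θ ω : ℝ) : EReal) ≤ f ω u) :
    (∃ x : Lp H 2 μ, intFun μ f x ≠ ⊤) ∧
      (∀ x : Lp H 2 μ, intFun μ f x ≠ ⊥) ∧
      LowerSemicontinuous (fun x : Lp H 2 μ => intFun μ f x) ∧
      ∀ x y : Lp H 2 μ, ∀ t : ℝ, 0 ≤ t → t ≤ 1 →
        intFun μ f (t • x + (1 - t) • y) ≤
          (t : EReal) * intFun μ f x + ((1 - t : ℝ) : EReal) * intFun μ f y :=
  integral_functional_proper_convex_lsc_general f hf hmeas hr hmin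
end

section
/- Under the assumptions of the previous statement (f_ω proper lsc convex on a separable Hilbert space H satisfying (i)–(iii), f(x) = ∫ f_ω(x(ω)) dμ on L²(Ω, μ; H)): for x, x* ∈ L²(Ω, μ; H), if x*(ω) ∈ ∂f_ω(x(ω)) for μ-a.e. ω, then x* ∈ ∂f(x), where ∂ denotes the convex subdifferential. -/
open MeasureTheory RealInnerProductSpace

/-- The convex subdifferential of an extended-real-valued function. -/
def InSubdiff {H : Type*} [NormedAddCommGroup H] [InnerProductSpace ℝ H]
    (g : H → EReal) (u u' : H) : Prop :=
  ∀ v : H, g u + ((⟪v - u, u'⟫ : ℝ) : EReal) ≤ g v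

/-! Integrating the a.e. subgradient inequality `f_ω(x ω) + ⟪y ω - x ω, x' ω⟫ ≤ f_ω(y ω)`
gives the claim once `ω ↦ f_ω(x ω)` is known to be integrable; this follows from squeezing it
between the integrable affine minorant `⟪x ω, s ω⟫ + θ ω` and `f_ω(y ω) - ⟪y ω - x ω, x' ω⟫`
(when `f(y) = +∞` there is nothing to prove). -/

theorem MeasureTheory.MemLp.integrable_inner {Ω 𝕜 E : Type*} [MeasurableSpace Ω] {μ : Measure Ω}
    [RCLike 𝕜] [NormedAddCommGroup E] [InnerProductSpace 𝕜 E] {u v : Ω → E}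
    (hu : MemLp u 2 μ) (hv : MemLp v 2 μ) : Integrable (fun ω => inner 𝕜 (u ω) (v ω)) μ := by
  refine (L2.integrable_inner (𝕜 := 𝕜) (hu.toLp u) (hv.toLp v)).congr ?_
  filter_upwards [hu.coeFn_toLp, hv.coeFn_toLp] with ω hu' hv'
  rw [hu', hv']

namespace EReal

theorem toReal_add_coe_le_toReal {a b : EReal} {c : ℝ} (h : a + c ≤ b) (ha : a ≠ ⊥)
    (hb : b ≠ ⊤) : a.toReal + c ≤ b.toReal := by
  have ha' : a ≠ ⊤ := fun ha_top => hb (top_le_iff.mp (by simpa [ha_top] using h))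
  have hac : a + c ≠ ⊥ := by simp [add_eq_bot_iff, ha]
  simpa [toReal_add ha' ha (coe_ne_top c) (coe_ne_bot c)] using toReal_le_toReal h hac hb

theorem le_toReal_of_coe_le_s9 {a : EReal} {c : ℝ} (h : (c : EReal) ≤ a) (ha : a ≠ ⊤) :
    c ≤ a.toReal := by
  simpa using toReal_le_toReal h (coe_ne_bot c) ha

end EReal

section IntegralFunctional

variable {Ω H : Type*} [MeasurableSpace Ω] {μ : Measure Ω}
    [NormedAddCommGroup H] [InnerProductSpace ℝ H] {f : Ω → H → EReal} {x y : Ω → H}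

theorem intFun_eq_integral (hfin : ∀ᵐ ω ∂μ, f ω (x ω) ≠ ⊤)
    (hint : Integrable (fun ω => (f ω (x ω)).toReal) μ) :
    intFun μ f x = ((∫ ω, (f ω (x ω)).toReal ∂μ : ℝ) : EReal) := by
  rw [intFun, if_pos ⟨hfin, hint⟩]

theorem intFun_eq_top (h : ¬((∀ᵐ ω ∂μ, f ω (x ω) ≠ ⊤) ∧
    Integrable (fun ω => (f ω (x ω)).toReal) μ)) : intFun μ f x = ⊤ := by
  rw [intFun, if_neg h]

theorem intFun_add_integral_le {c l : Ω → ℝ} (hc : Integrable c μ) (hl : Integrable l μ)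
    (hmx : AEMeasurable (fun ω => f ω (x ω)) μ) (hlx : ∀ᵐ ω ∂μ, (l ω : EReal) ≤ f ω (x ω))
    (hle : ∀ᵐ ω ∂μ, f ω (x ω) + c ω ≤ f ω (y ω)) :
    intFun μ f x + ((∫ ω, c ω ∂μ : ℝ) : EReal) ≤ intFun μ f y := by
  by_cases hy : (∀ᵐ ω ∂μ, f ω (y ω) ≠ ⊤) ∧ Integrable (fun ω => (f ω (y ω)).toReal) μ
  swap
  · rw [intFun_eq_top hy]
    exact le_top
  obtain ⟨hyfin, hyint⟩ := hy
  have hxfin : ∀ᵐ ω ∂μ, f ω (x ω) ≠ ⊤ := by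
    filter_upwards [hle, hyfin] with ω hle hyfin hxtop
    exact hyfin (top_le_iff.mp (by simpa [hxtop] using hle))
  have hxbot : ∀ᵐ ω ∂μ, f ω (x ω) ≠ ⊥ := by
    filter_upwards [hlx] with ω hlx
    exact ne_bot_of_le_ne_bot (EReal.coe_ne_bot _) hlx
  have hle_real : ∀ᵐ ω ∂μ, (f ω (x ω)).toReal + c ω ≤ (f ω (y ω)).toReal := by
    filter_upwards [hle, hxbot, hyfin] with ω hle hxbot hyfin
    exact EReal.toReal_add_coe_le_toReal hle hxbot hyfin
  have hxint : Integrable (fun ω => (f ω (x ω)).toReal) μ := by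
    refine integrable_of_le_of_le hmx.ereal_toReal.aestronglyMeasurable ?_ ?_ hl (hyint.sub hc)
    · filter_upwards [hlx, hxfin] with ω hlx hxfin
      exact EReal.le_toReal_of_coe_le_s9 hlx hxfin
    · filter_upwards [hle_real] with ω hle_real
      exact le_sub_iff_add_le.mpr hle_real
  rw [intFun_eq_integral hxfin hxint, intFun_eq_integral hyfin hyint, ← EReal.coe_add,
    EReal.coe_le_coe_iff, ← integral_add hxint hc]
  exact integral_mono_ae (hxint.add hc) hyint hle_real

end IntegralFunctional

theorem fiberwise_subgradient_is_subgradient_general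
    {Ω H : Type*} [MeasurableSpace Ω] {μ : Measure Ω}
    [NormedAddCommGroup H] [InnerProductSpace ℝ H]
    (f : Ω → H → EReal)
    (hmeas : ∀ x : Ω → H, MemLp x 2 μ → AEMeasurable (fun ω => f ω (x ω)) μ)
    (hmin : ∃ s : Ω → H, MemLp s 2 μ ∧ ∃ θ : Ω → ℝ, Integrable θ μ ∧
      ∀ᵐ ω ∂μ, ∀ u : H, ((⟪u, s ω⟫ + θ ω : ℝ) : EReal) ≤ f ω u)
    (x x' : Ω → H) (hx : MemLp x 2 μ) (hx' : MemLp x' 2 μ)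
    (hsub : ∀ᵐ ω ∂μ, InSubdiff (f ω) (x ω) (x' ω)) :
    ∀ y : Ω → H, MemLp y 2 μ →
      intFun μ f x + ((∫ ω, ⟪y ω - x ω, x' ω⟫ ∂μ : ℝ) : EReal) ≤ intFun μ f y := by
  intro y hy
  obtain ⟨s, hs, θ, hθ, hminorant⟩ := hmin
  refine intFun_add_integral_le ((hy.sub hx).integrable_inner hx')
    ((hx.integrable_inner hs).add hθ) (hmeas x hx) ?_ ?_
  · filter_upwards [hminorant] with ω hminorant using hminorant (x ω)
  · filter_upwards [hsub] with ω hsub using hsub (y ω)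

theorem fiberwise_subgradient_is_subgradient
    {Ω H : Type*} [MeasurableSpace Ω] {μ : Measure Ω} [SigmaFinite μ]
    [NormedAddCommGroup H] [InnerProductSpace ℝ H] [CompleteSpace H]
    [SecondCountableTopology H]
    (f : Ω → H → EReal) (hf : ∀ ω, ProperLscConvex (f ω))
    (hmeas : ∀ x : Ω → H, MemLp x 2 μ → AEMeasurable (fun ω => f ω (x ω)) μ)
    (hr : ∃ r : Ω → H, MemLp r 2 μ ∧ (∀ᵐ ω ∂μ, f ω (r ω) ≠ ⊤) ∧
      Integrable (fun ω => (f ω (r ω)).toReal) μ)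
    (hmin : ∃ s : Ω → H, MemLp s 2 μ ∧ ∃ θ : Ω → ℝ, Integrable θ μ ∧
      ∀ᵐ ω ∂μ, ∀ u : H, ((⟪u, s ω⟫ + θ ω : ℝ) : EReal) ≤ f ω u)
    (x x' : Ω → H) (hx : MemLp x 2 μ) (hx' : MemLp x' 2 μ)
    (hsub : ∀ᵐ ω ∂μ, InSubdiff (f ω) (x ω) (x' ω)) :
    ∀ y : Ω → H, MemLp y 2 μ →
      intFun μ f x + ((∫ ω, ⟪y ω - x ω, x' ω⟫ ∂μ : ℝ) : EReal) ≤ intFun μ f y :=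
  fiberwise_subgradient_is_subgradient_general f hmeas hmin x x' hx hx' hsub
end

section
/- Let (Ω, F, μ) be a σ-finite measure space and H a separable real Hilbert space, and for each ω ∈ Ω let C_ω be a nonempty closed convex subset of H. Define C = { x ∈ L²(Ω, μ; H) : x(ω) ∈ C_ω for μ-a.e. ω }, and suppose C ≠ ∅ and that ω ↦ proj_{C_ω}(x(ω)) is measurable for each x ∈ L². Then C is a nonempty closed convex subset of L²(Ω, μ; H), and the projection onto C acts fiberwise: for every x ∈ L², (proj_C x)(ω) = proj_{C_ω}(x(ω)) for μ-a.e. ω; moreover d_C(x)² = ∫_Ω d_{C_ω}(x(ω))² dμ(ω). -/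
/-!
Pointwise, `P ω (x ω)` is at least as close to `x ω` as the value at `ω` of any selection of `C`;
comparing with a fixed selection `x₀` gives `‖x ω - P ω (x ω)‖ ≤ ‖x ω - x₀ ω‖`, so it defines an
element of `L²`, and monotonicity of the `L²` norm makes it a nearest point of `C` to `x`. Since every point has a
nearest point in `C`, the set `C` is closed, and `d_C(x)² = ‖x - proj_C x‖²` is computed fiberwise.
-/

open MeasureTheory RealInnerProductSpace

lemma Metric.infDist_eq_dist_of_forall_dist_le {α : Type*} [PseudoMetricSpace α] {s : Set α}
    {x p : α} (hp : p ∈ s) (h : ∀ y ∈ s, dist x p ≤ dist x y) : infDist x s = dist x p :=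
  le_antisymm (infDist_le_dist_of_mem hp) ((le_infDist ⟨p, hp⟩).2 h)

lemma isClosed_of_forall_exists_forall_dist_le {α : Type*} [MetricSpace α] {s : Set α}
    (h : ∀ x, ∃ p ∈ s, ∀ y ∈ s, dist x p ≤ dist x y) : IsClosed s := by
  refine isClosed_of_closure_subset fun x hx => ?_
  obtain ⟨p, hp, hmin⟩ := h x
  have hxp : dist x p = 0 := by
    rw [← Metric.infDist_eq_dist_of_forall_dist_le hp hmin]
    exact (Metric.mem_closure_iff_infDist_zero ⟨p, hp⟩).1 hx
  rwa [dist_eq_zero.1 hxp]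

section InnerProduct

variable {H : Type*} [NormedAddCommGroup H] [InnerProductSpace ℝ H] {K : Set H} {u p : H}

lemma norm_sub_le_norm_sub_of_inner_nonpos (hp : ∀ c ∈ K, ⟪c - p, u - p⟫ ≤ 0) {c : H}
    (hc : c ∈ K) : ‖u - p‖ ≤ ‖u - c‖ := by
  have hsq : ‖u - c‖ ^ 2 = ‖u - p‖ ^ 2 - 2 * ⟪c - p, u - p⟫ + ‖c - p‖ ^ 2 := by
    rw [show u - c = (u - p) - (c - p) by abel, norm_sub_sq_real, real_inner_comm]
  rw [← pow_le_pow_iff_left₀ (norm_nonneg _) (norm_nonneg _) two_ne_zero]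
  nlinarith [hp c hc, sq_nonneg ‖c - p‖]

lemma infDist_eq_norm_sub_of_inner_nonpos (hpK : p ∈ K) (hp : ∀ c ∈ K, ⟪c - p, u - p⟫ ≤ 0) :
    Metric.infDist u K = ‖u - p‖ := by
  rw [Metric.infDist_eq_dist_of_forall_dist_le hpK, dist_eq_norm]
  intro c hc
  rw [dist_eq_norm, dist_eq_norm]
  exact norm_sub_le_norm_sub_of_inner_nonpos hp hc

end InnerProduct

namespace MeasureTheory

variable {Ω E : Type*} [MeasurableSpace Ω] {μ : Measure Ω} [NormedAddCommGroup E]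
  {p : ENNReal}

lemma MemLp.of_ae_norm_sub_le_norm_sub {f g h : Ω → E} (hf : MemLp f p μ) (hh : MemLp h p μ)
    (hg : AEStronglyMeasurable g μ) (hfg : ∀ᵐ ω ∂μ, ‖f ω - g ω‖ ≤ ‖f ω - h ω‖) :
    MemLp g p μ := by
  have hsub : MemLp (f - g) p μ := (hf.sub hh).of_le (hf.1.sub hg) hfg
  simpa using hf.sub hsub

lemma Lp.dist_le_dist_of_ae_norm_sub_le [Fact (1 ≤ p)] {f g h : Lp E p μ}
    (hfg : ∀ᵐ ω ∂μ, ‖f ω - g ω‖ ≤ ‖f ω - h ω‖) : dist f g ≤ dist f h := by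
  rw [_root_.dist_eq_norm, _root_.dist_eq_norm]
  refine Lp.norm_le_norm_of_ae_le ?_
  filter_upwards [Lp.coeFn_sub f g, Lp.coeFn_sub f h, hfg] with ω hg hh hω
  simpa only [hg, hh, Pi.sub_apply] using hω

lemma convex_setOf_ae_mem [NormedSpace ℝ E] {C : Ω → Set E} (hC : ∀ ω, Convex ℝ (C ω)) :
    Convex ℝ {x : Lp E p μ | ∀ᵐ ω ∂μ, x ω ∈ C ω} := by
  intro x hx y hy a b ha hb hab
  filter_upwards [hx, hy, Lp.coeFn_add (a • x) (b • y), Lp.coeFn_smul a x, Lp.coeFn_smul b y]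
    with ω hxω hyω hadd hax hby
  rw [hadd, Pi.add_apply, hax, hby]
  exact hC ω hxω hyω ha hb hab

lemma L2.norm_sq_eq_integral_norm_sq [InnerProductSpace ℝ E] (f : Lp E 2 μ) :
    ‖f‖ ^ 2 = ∫ ω, ‖f ω‖ ^ 2 ∂μ := by
  rw [← real_inner_self_eq_norm_sq, L2.inner_def]
  simp_rw [real_inner_self_eq_norm_sq]

end MeasureTheory

theorem integral_of_convex_sets_projection_general
    {Ω H : Type*} [MeasurableSpace Ω] {μ : Measure Ω}
    [NormedAddCommGroup H] [InnerProductSpace ℝ H]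
    (C : Ω → Set H)
    (hC : ∀ ω, (C ω).Nonempty ∧ IsClosed (C ω) ∧ Convex ℝ (C ω))
    -- `P ω` is the metric projection onto `C ω`, given by its variational
    -- characterization
    (P : Ω → H → H)
    (hP : ∀ ω, ∀ u : H, P ω u ∈ C ω ∧ ∀ c ∈ C ω, ⟪c - P ω u, u - P ω u⟫ ≤ 0)
    (hPmeas : ∀ x : Ω → H, MemLp x 2 μ →
      AEStronglyMeasurable (fun ω => P ω (x ω)) μ)
    (hCne : {x : Lp H 2 μ | ∀ᵐ ω ∂μ, x ω ∈ C ω}.Nonempty) :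
    Convex ℝ {x : Lp H 2 μ | ∀ᵐ ω ∂μ, x ω ∈ C ω} ∧
      IsClosed {x : Lp H 2 μ | ∀ᵐ ω ∂μ, x ω ∈ C ω} ∧
      ∀ x : Lp H 2 μ,
        MemLp (fun ω => P ω (x ω)) 2 μ ∧
        (∀ᵐ ω ∂μ, P ω (x ω) ∈ C ω) ∧
        (∀ y : Lp H 2 μ, (∀ᵐ ω ∂μ, y ω ∈ C ω) →
          (∫ ω, ⟪y ω - P ω (x ω), x ω - P ω (x ω)⟫ ∂μ) ≤ 0) ∧
        (Metric.infDist x {z : Lp H 2 μ | ∀ᵐ ω ∂μ, z ω ∈ C ω}) ^ 2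
          = ∫ ω, (Metric.infDist (x ω) (C ω)) ^ 2 ∂μ := by
  set S := {x : Lp H 2 μ | ∀ᵐ ω ∂μ, x ω ∈ C ω}
  obtain ⟨x₀, hx₀ : ∀ᵐ ω ∂μ, x₀ ω ∈ C ω⟩ := hCne
  have hmem (x : Lp H 2 μ) : MemLp (fun ω => P ω (x ω)) 2 μ :=
    (Lp.memLp x).of_ae_norm_sub_le_norm_sub (Lp.memLp x₀) (hPmeas x (Lp.memLp x))
      (hx₀.mono fun ω hω => norm_sub_le_norm_sub_of_inner_nonpos (hP ω (x ω)).2 hω)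
  have hnearest (x : Lp H 2 μ) :
      (hmem x).toLp _ ∈ S ∧ ∀ y ∈ S, dist x ((hmem x).toLp _) ≤ dist x y := by
    refine ⟨(hmem x).coeFn_toLp.mono fun ω hω => hω ▸ (hP ω (x ω)).1,
      fun y hy => Lp.dist_le_dist_of_ae_norm_sub_le ?_⟩
    filter_upwards [(hmem x).coeFn_toLp, hy] with ω hω hyω
    rw [hω]
    exact norm_sub_le_norm_sub_of_inner_nonpos (hP ω (x ω)).2 hyω
  refine ⟨convex_setOf_ae_mem fun ω => (hC ω).2.2,
    isClosed_of_forall_exists_forall_dist_le fun x => ⟨_, hnearest x⟩, fun x => ⟨hmem x,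
      ae_of_all _ fun ω => (hP ω (x ω)).1,
      fun y hy => integral_nonpos_of_ae (hy.mono fun ω hω => (hP ω (x ω)).2 _ hω), ?_⟩⟩
  rw [Metric.infDist_eq_dist_of_forall_dist_le (hnearest x).1 (hnearest x).2, dist_eq_norm,
    L2.norm_sq_eq_integral_norm_sq]
  refine integral_congr_ae ?_
  filter_upwards [Lp.coeFn_sub x ((hmem x).toLp _), (hmem x).coeFn_toLp] with ω hsub hω
  rw [hsub, Pi.sub_apply, hω, infDist_eq_norm_sub_of_inner_nonpos (hP ω (x ω)).1 (hP ω (x ω)).2]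

theorem integral_of_convex_sets_projection
    {Ω H : Type*} [MeasurableSpace Ω] {μ : Measure Ω} [SigmaFinite μ]
    [NormedAddCommGroup H] [InnerProductSpace ℝ H] [CompleteSpace H]
    [SecondCountableTopology H]
    (C : Ω → Set H)
    (hC : ∀ ω, (C ω).Nonempty ∧ IsClosed (C ω) ∧ Convex ℝ (C ω))
    -- `P ω` is the metric projection onto `C ω`, given by its variational
    -- characterization
    (P : Ω → H → H)
    (hP : ∀ ω, ∀ u : H, P ω u ∈ C ω ∧ ∀ c ∈ C ω, ⟪c - P ω u, u - P ω u⟫ ≤ 0)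
    (hPmeas : ∀ x : Ω → H, MemLp x 2 μ →
      AEStronglyMeasurable (fun ω => P ω (x ω)) μ)
    (hCne : {x : Lp H 2 μ | ∀ᵐ ω ∂μ, x ω ∈ C ω}.Nonempty) :
    Convex ℝ {x : Lp H 2 μ | ∀ᵐ ω ∂μ, x ω ∈ C ω} ∧
      IsClosed {x : Lp H 2 μ | ∀ᵐ ω ∂μ, x ω ∈ C ω} ∧
      ∀ x : Lp H 2 μ,
        MemLp (fun ω => P ω (x ω)) 2 μ ∧
        (∀ᵐ ω ∂μ, P ω (x ω) ∈ C ω) ∧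
        (∀ y : Lp H 2 μ, (∀ᵐ ω ∂μ, y ω ∈ C ω) →
          (∫ ω, ⟪y ω - P ω (x ω), x ω - P ω (x ω)⟫ ∂μ) ≤ 0) ∧
        (Metric.infDist x {z : Lp H 2 μ | ∀ᵐ ω ∂μ, z ω ∈ C ω}) ^ 2
          = ∫ ω, (Metric.infDist (x ω) (C ω)) ^ 2 ∂μ :=
  integral_of_convex_sets_projection_general C hC P hP hPmeas hCne
end

section
/- Let (Ω, F, μ) be a σ-finite measure space and H a separable real Hilbert space, and suppose (C_ω) are nonempty closed convex cones in H with C = {x ∈ L²(Ω, μ; H) : x(ω) ∈ C_ω a.e.} nonempty and fiberwise-measurable projections. Then C is a nonempty closed convex cone in L²(Ω, μ; H) and its polar cone satisfies C^⊖ = { x* ∈ L²(Ω, μ; H) : x*(ω) ∈ C_ω^⊖ for μ-a.e. ω }, where K^⊖ = { u* : ⟨u, u*⟩ ≤ 0 for all u ∈ K }. -/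
/-!
If `p ∈ K` satisfies the variational inequality `⟪c - p, u - p⟫ ≤ 0` on a cone `K`, testing it
with `c = 0` and `c = 2 • p` gives `⟪p, u - p⟫ = 0`, hence `‖p‖ ≤ ‖u‖` by Pythagoras. So for
`x'` in the polar of the selections, `y ω = P ω (x' ω)` is an `L²` selection with
`⟪y, x'⟫ = ‖y‖² ≤ 0`; thus `P ω (x' ω) = 0` a.e., and the variational inequality at `p = 0` says
that `x' ω` is in the polar of `C ω`. Closedness holds because an `L²`-convergent sequence has an
a.e. convergent subsequence.
-/

open MeasureTheory RealInnerProductSpace Filter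

section ConeProjection

variable {H : Type*} [NormedAddCommGroup H] [InnerProductSpace ℝ H] {K : Set H} {u p : H}

theorem inner_sub_eq_zero_of_forall_inner_sub_nonpos_of_cone
    (hK : ∀ v ∈ K, ∀ t : ℝ, 0 ≤ t → t • v ∈ K) (hpK : p ∈ K)
    (hvar : ∀ c ∈ K, ⟪c - p, u - p⟫ ≤ 0) : ⟪p, u - p⟫ = 0 := by
  have h_zero : ⟪0 - p, u - p⟫ ≤ 0 := hvar 0 (by simpa using hK p hpK 0 le_rfl)
  have h_two : ⟪(2 : ℝ) • p - p, u - p⟫ ≤ 0 := hvar _ (hK p hpK 2 zero_le_two)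
  rw [zero_sub, inner_neg_left, neg_nonpos] at h_zero
  rw [two_smul, add_sub_cancel_right] at h_two
  exact le_antisymm h_two h_zero

theorem norm_le_of_forall_inner_sub_nonpos_of_cone
    (hK : ∀ v ∈ K, ∀ t : ℝ, 0 ≤ t → t • v ∈ K) (hpK : p ∈ K)
    (hvar : ∀ c ∈ K, ⟪c - p, u - p⟫ ≤ 0) : ‖p‖ ≤ ‖u‖ := by
  have h_pythagoras := norm_add_sq_eq_norm_sq_add_norm_sq_real
    (inner_sub_eq_zero_of_forall_inner_sub_nonpos_of_cone hK hpK hvar)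
  rw [add_sub_cancel] at h_pythagoras
  rw [mul_self_le_mul_self_iff (norm_nonneg p) (norm_nonneg u), h_pythagoras]
  exact le_add_of_nonneg_right (mul_self_nonneg _)

end ConeProjection

namespace MeasureTheory.Lp

variable {Ω E : Type*} [MeasurableSpace Ω] {μ : Measure Ω} [NormedAddCommGroup E]
  {p : ENNReal} {C : Ω → Set E}

theorem convex_setOf_ae_mem [NormedSpace ℝ E] (hC : ∀ ω, Convex ℝ (C ω)) :
    Convex ℝ {x : Lp E p μ | ∀ᵐ ω ∂μ, x ω ∈ C ω} := by
  intro x hx y hy a b ha hb hab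
  filter_upwards [hx, hy, coeFn_add (a • x) (b • y), coeFn_smul a x, coeFn_smul b y]
    with ω hxω hyω h_add h_smul_x h_smul_y
  rw [h_add, Pi.add_apply, h_smul_x, h_smul_y, Pi.smul_apply, Pi.smul_apply]
  exact hC ω hxω hyω ha hb hab

theorem ae_smul_mem [NormedSpace ℝ E] {t : ℝ} (hC : ∀ ω, ∀ u ∈ C ω, t • u ∈ C ω)
    {x : Lp E p μ} (hx : ∀ᵐ ω ∂μ, x ω ∈ C ω) : ∀ᵐ ω ∂μ, (t • x) ω ∈ C ω := by
  filter_upwards [hx, coeFn_smul t x] with ω hxω h_smul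
  rw [h_smul, Pi.smul_apply]
  exact hC ω _ hxω

theorem isClosed_setOf_ae_mem [Fact (1 ≤ p)] (hC : ∀ ω, IsClosed (C ω)) :
    IsClosed {x : Lp E p μ | ∀ᵐ ω ∂μ, x ω ∈ C ω} := by
  refine IsSeqClosed.isClosed fun f x hf hfx => ?_
  obtain ⟨ns, -, h_ae_tendsto⟩ := (tendstoInMeasure_of_tendsto_Lp hfx).exists_seq_tendsto_ae
  filter_upwards [h_ae_tendsto, ae_all_iff.mpr fun n => hf (ns n)] with ω h_tendsto h_mem
  exact (hC ω).mem_of_tendsto h_tendsto (Eventually.of_forall h_mem)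

end MeasureTheory.Lp

namespace MeasureTheory.L2

variable {Ω H : Type*} [MeasurableSpace Ω] {μ : Measure Ω}
  [NormedAddCommGroup H] [InnerProductSpace ℝ H] {C : Ω → Set H}

theorem inner_nonpos_of_ae_mem_polar {y x' : Lp H 2 μ} (hy : ∀ᵐ ω ∂μ, y ω ∈ C ω)
    (hx' : ∀ᵐ ω ∂μ, ∀ u ∈ C ω, ⟪u, x' ω⟫ ≤ 0) : ⟪y, x'⟫ ≤ 0 := by
  rw [inner_def]
  refine integral_nonpos_of_ae ?_
  filter_upwards [hx', hy] with ω hx'ω hyω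
  exact hx'ω _ hyω

theorem ae_mem_polar_of_inner_nonpos
    (hC : ∀ ω, ∀ u ∈ C ω, ∀ t : ℝ, 0 ≤ t → t • u ∈ C ω) (P : Ω → H → H)
    (hP : ∀ ω, ∀ u : H, P ω u ∈ C ω ∧ ∀ c ∈ C ω, ⟪c - P ω u, u - P ω u⟫ ≤ 0)
    (hPmeas : ∀ x : Ω → H, MemLp x 2 μ → AEStronglyMeasurable (fun ω => P ω (x ω)) μ)
    {x' : Lp H 2 μ} (hx' : ∀ y : Lp H 2 μ, (∀ᵐ ω ∂μ, y ω ∈ C ω) → ⟪y, x'⟫ ≤ 0) :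
    ∀ᵐ ω ∂μ, ∀ u ∈ C ω, ⟪u, x' ω⟫ ≤ 0 := by
  have h_memLp : MemLp (fun ω => P ω (x' ω)) 2 μ :=
    (Lp.memLp x').of_le (hPmeas _ (Lp.memLp x')) <| Eventually.of_forall fun ω =>
      norm_le_of_forall_inner_sub_nonpos_of_cone (hC ω) (hP ω _).1 (hP ω _).2
  set y : Lp H 2 μ := h_memLp.toLp _
  have hy : ⇑y =ᵐ[μ] fun ω => P ω (x' ω) := h_memLp.coeFn_toLp
  have h_inner : ⟪y, x'⟫ = ⟪y, y⟫ := by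
    rw [inner_def, inner_def]
    refine integral_congr_ae ?_
    filter_upwards [hy] with ω hyω
    rw [hyω, ← sub_eq_zero, ← inner_sub_right]
    exact inner_sub_eq_zero_of_forall_inner_sub_nonpos_of_cone (hC ω) (hP ω _).1 (hP ω _).2
  have hy_zero : y = 0 := by
    rw [← real_inner_self_nonpos, ← h_inner]
    exact hx' y (hy.mono fun ω hyω => hyω ▸ (hP ω _).1)
  filter_upwards [hy, hy_zero ▸ Lp.coeFn_zero H 2 μ] with ω hyω hy0ω u hu
  simpa [← hyω, hy0ω] using (hP ω (x' ω)).2 u hu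

end MeasureTheory.L2

theorem integral_of_cones_polar_general
    {Ω H : Type*} [MeasurableSpace Ω] {μ : Measure Ω}
    [NormedAddCommGroup H] [InnerProductSpace ℝ H]
    (C : Ω → Set H)
    (hC : ∀ ω, (C ω).Nonempty ∧ IsClosed (C ω) ∧ Convex ℝ (C ω) ∧
      ∀ u ∈ C ω, ∀ t : ℝ, 0 ≤ t → t • u ∈ C ω)
    (P : Ω → H → H)
    (hP : ∀ ω, ∀ u : H, P ω u ∈ C ω ∧ ∀ c ∈ C ω, ⟪c - P ω u, u - P ω u⟫ ≤ 0)
    (hPmeas : ∀ x : Ω → H, MemLp x 2 μ →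
      AEStronglyMeasurable (fun ω => P ω (x ω)) μ) :
    Convex ℝ {x : Lp H 2 μ | ∀ᵐ ω ∂μ, x ω ∈ C ω} ∧
      IsClosed {x : Lp H 2 μ | ∀ᵐ ω ∂μ, x ω ∈ C ω} ∧
      (∀ x : Lp H 2 μ, (∀ᵐ ω ∂μ, x ω ∈ C ω) → ∀ t : ℝ, 0 ≤ t →
        ∀ᵐ ω ∂μ, (t • x : Lp H 2 μ) ω ∈ C ω) ∧
      {x' : Lp H 2 μ |
          ∀ y : Lp H 2 μ, (∀ᵐ ω ∂μ, y ω ∈ C ω) → ⟪y, x'⟫ ≤ 0}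
        = {x' : Lp H 2 μ |
            ∀ᵐ ω ∂μ, x' ω ∈ {u' : H | ∀ u ∈ C ω, ⟪u, u'⟫ ≤ 0}} :=
  ⟨Lp.convex_setOf_ae_mem fun ω => (hC ω).2.2.1,
    Lp.isClosed_setOf_ae_mem fun ω => (hC ω).2.1,
    fun _ hx t ht => Lp.ae_smul_mem (fun ω u hu => (hC ω).2.2.2 u hu t ht) hx,
    Set.ext fun _ => ⟨L2.ae_mem_polar_of_inner_nonpos (fun ω => (hC ω).2.2.2) P hP hPmeas,
      fun hx' _ hy => L2.inner_nonpos_of_ae_mem_polar hy hx'⟩⟩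

theorem integral_of_cones_polar
    {Ω H : Type*} [MeasurableSpace Ω] {μ : Measure Ω} [SigmaFinite μ]
    [NormedAddCommGroup H] [InnerProductSpace ℝ H] [CompleteSpace H]
    [SecondCountableTopology H]
    (C : Ω → Set H)
    (hC : ∀ ω, (C ω).Nonempty ∧ IsClosed (C ω) ∧ Convex ℝ (C ω) ∧
      ∀ u ∈ C ω, ∀ t : ℝ, 0 ≤ t → t • u ∈ C ω)
    (P : Ω → H → H)
    (hP : ∀ ω, ∀ u : H, P ω u ∈ C ω ∧ ∀ c ∈ C ω, ⟪c - P ω u, u - P ω u⟫ ≤ 0)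
    (hPmeas : ∀ x : Ω → H, MemLp x 2 μ →
      AEStronglyMeasurable (fun ω => P ω (x ω)) μ)
    (hCne : {x : Lp H 2 μ | ∀ᵐ ω ∂μ, x ω ∈ C ω}.Nonempty) :
    Convex ℝ {x : Lp H 2 μ | ∀ᵐ ω ∂μ, x ω ∈ C ω} ∧
      IsClosed {x : Lp H 2 μ | ∀ᵐ ω ∂μ, x ω ∈ C ω} ∧
      (∀ x : Lp H 2 μ, (∀ᵐ ω ∂μ, x ω ∈ C ω) → ∀ t : ℝ, 0 ≤ t →
        ∀ᵐ ω ∂μ, (t • x : Lp H 2 μ) ω ∈ C ω) ∧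
      {x' : Lp H 2 μ |
          ∀ y : Lp H 2 μ, (∀ᵐ ω ∂μ, y ω ∈ C ω) → ⟪y, x'⟫ ≤ 0}
        = {x' : Lp H 2 μ |
            ∀ᵐ ω ∂μ, x' ω ∈ {u' : H | ∀ u ∈ C ω, ⟪u, u'⟫ ≤ 0}} :=
  integral_of_cones_polar_general C hC P hP hPmeas
end

section
/- Let (Ω, F, μ) be a σ-finite measure space, H a separable real Hilbert space, and for each ω ∈ Ω let A_ω : H → 2^H be maximally monotone such that for every x ∈ L²(Ω, μ; H) the map ω ↦ J_{A_ω}(x(ω)) is measurable, and such that the operator A on L²(Ω, μ; H) defined by x* ∈ Ax iff x*(ω) ∈ A_ω(x(ω)) a.e. has nonempty domain. Then A is maximally monotone on L²(Ω, μ; H), and for every γ > 0 its resolvent acts fiberwise: (J_{γA} x)(ω) = J_{γ A_ω}(x(ω)) for μ-a.e. ω and every x ∈ L²(Ω, μ; H). -/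
open MeasureTheory RealInnerProductSpace

/-- A set-valued operator is monotone. -/
def MonotoneOp {H : Type*} [NormedAddCommGroup H] [InnerProductSpace ℝ H]
    (A : H → Set H) : Prop :=
  ∀ x y x' y' : H, x' ∈ A x → y' ∈ A y → 0 ≤ ⟪x - y, x' - y'⟫

/-- A set-valued operator is maximally monotone. -/
def MaximallyMonotoneOp {H : Type*} [NormedAddCommGroup H] [InnerProductSpace ℝ H]
    (A : H → Set H) : Prop :=
  MonotoneOp A ∧ ∀ x x' : H, (∀ y y' : H, y' ∈ A y → 0 ≤ ⟪x - y, x' - y'⟫) → x' ∈ A x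

/-!
Monotonicity of `A` is integrated pointwise monotonicity. Since `ω ↦ J_{A_ω}(x ω)`
is measurable and, by nonexpansiveness and the nonempty domain, square-integrable, the resolvent
of `A` exists in `L²` for `γ = 1`. The resolvent identity
`J_{γ'A} x = J_{γA}((γ/γ') x + (1 - γ/γ') J_{γ'A} x)` exhibits `J_{γ'A} x` as the fixed point of
a contraction of `L²` whenever `γ < 2γ'`, so existence propagates from `γ = 1` to every `γ > 0`.
Existence for `γ = 1` is Minty's surjectivity criterion, which gives maximality, and uniqueness
is pointwise nonexpansiveness.
-/

theorem MonotoneOp.norm_sub_le_of_smul_sub_mem {H : Type*} [NormedAddCommGroup H]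
    [InnerProductSpace ℝ H] {A : H → Set H} (hA : MonotoneOp A)
    {γ : ℝ} (hγ : 0 < γ) {u v p q : H} (hp : γ⁻¹ • (u - p) ∈ A p)
    (hq : γ⁻¹ • (v - q) ∈ A q) : ‖p - q‖ ≤ ‖u - v‖ := by
  have hmono := hA p q _ _ hp hq
  rw [← smul_sub, real_inner_smul_right] at hmono
  have hsq : ‖p - q‖ ^ 2 ≤ ⟪p - q, u - v⟫ := by
    have h := nonneg_of_mul_nonneg_right hmono (inv_pos.2 hγ)
    rw [show u - p - (v - q) = (u - v) - (p - q) by abel, inner_sub_right,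
      real_inner_self_eq_norm_sq] at h
    linarith
  nlinarith [real_inner_le_norm (p - q) (u - v), norm_nonneg (p - q), norm_nonneg (u - v)]

namespace MeasureTheory.Lp

variable {Ω E : Type*} [MeasurableSpace Ω] {μ : Measure Ω} [NormedAddCommGroup E]
  [CompleteSpace E] {p : ENNReal} [Fact (1 ≤ p)]

theorem exists_ae_fixedPoint_of_ae_norm_sub_le {K : NNReal} (hK : K < 1)
    (F : Lp E p μ → Ω → E) (hF : ∀ f, MemLp (F f) p μ)
    (hFK : ∀ f g, ∀ᵐ ω ∂μ, ‖F f ω - F g ω‖ ≤ K * ‖f ω - g ω‖) :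
    ∃ g : Lp E p μ, F g =ᵐ[μ] g := by
  set Φ : Lp E p μ → Lp E p μ := fun f => (hF f).toLp (F f)
  have hΦ : ContractingWith K Φ := by
    refine ⟨hK, LipschitzWith.of_dist_le_mul fun f g => ?_⟩
    rw [_root_.dist_eq_norm, _root_.dist_eq_norm]
    refine norm_le_mul_norm_of_ae_le_mul ?_
    filter_upwards [hFK f g, coeFn_sub (Φ f) (Φ g), coeFn_sub f g, (hF f).coeFn_toLp,
      (hF g).coeFn_toLp] with ω hω hΦfg hfg hΦf hΦg
    rwa [hΦfg, hfg, Pi.sub_apply, Pi.sub_apply, hΦf, hΦg]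
  have : Nonempty (Lp E p μ) := ⟨0⟩
  have hΦF : (Φ (hΦ.fixedPoint Φ) : Ω → E) =ᵐ[μ] F (hΦ.fixedPoint Φ) := (hF _).coeFn_toLp
  rw [hΦ.fixedPoint_isFixedPt] at hΦF
  exact ⟨_, hΦF.symm⟩

end MeasureTheory.Lp

section DirectIntegral

variable {Ω H : Type*} [MeasurableSpace Ω] {μ : Measure Ω} [NormedAddCommGroup H]
  [InnerProductSpace ℝ H] {A : Ω → H → Set H}

/-- `ran (Id + γ A) = L²(Ω, μ; H)` for the operator `A` acting fiberwise through `A ω`. -/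
def HasL2Resolvent (A : Ω → H → Set H) (μ : Measure Ω) (γ : ℝ) : Prop :=
  ∀ x : Ω → H, MemLp x 2 μ → ∃ p : Ω → H, MemLp p 2 μ ∧ ∀ᵐ ω ∂μ, γ⁻¹ • (x ω - p ω) ∈ A ω (p ω)

theorem memLp_of_ae_smul_sub_mem (hA : ∀ ω, MonotoneOp (A ω)) {γ : ℝ} (hγ : 0 < γ)
    {x₀ x₀' x p : Ω → H} (hx₀ : MemLp x₀ 2 μ) (hx₀' : MemLp x₀' 2 μ)
    (hx₀A : ∀ᵐ ω ∂μ, x₀' ω ∈ A ω (x₀ ω)) (hx : MemLp x 2 μ) (hp : AEStronglyMeasurable p μ)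
    (hpA : ∀ᵐ ω ∂μ, γ⁻¹ • (x ω - p ω) ∈ A ω (p ω)) : MemLp p 2 μ := by
  refine (((hx.sub hx₀).sub (hx₀'.const_smul γ)).norm.add hx₀.norm).mono' hp ?_
  filter_upwards [hx₀A, hpA] with ω hω hpω
  have hx₀ω : γ⁻¹ • ((x₀ ω + γ • x₀' ω) - x₀ ω) ∈ A ω (x₀ ω) := by
    rwa [add_sub_cancel_left, smul_smul, inv_mul_cancel₀ hγ.ne', one_smul]
  have hle := (hA ω).norm_sub_le_of_smul_sub_mem hγ hpω hx₀ω
  calc ‖p ω‖ ≤ ‖p ω - x₀ ω‖ + ‖x₀ ω‖ := norm_le_norm_sub_add _ _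
    _ ≤ ‖x ω - (x₀ ω + γ • x₀' ω)‖ + ‖x₀ ω‖ := by gcongr
    _ = ‖x ω - x₀ ω - γ • x₀' ω‖ + ‖x₀ ω‖ := by rw [sub_add_eq_sub_sub]

-- The `γ'`-resolvent of `x` is the fixed point of `g ↦ J_γ (c • x + (1 - c) • g)`, `c = γ / γ'`,
-- which is a contraction of `L²` with constant `|1 - c| < 1`.
theorem HasL2Resolvent.of_lt_two_mul [CompleteSpace H] (hA : ∀ ω, MonotoneOp (A ω))
    {γ γ' : ℝ} (hγ : 0 < γ) (hγ' : 0 < γ') (hlt : γ < 2 * γ') (hres : HasL2Resolvent A μ γ) :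
    HasL2Resolvent A μ γ' := by
  intro x hx
  set c := γ / γ'
  have hc : |1 - c| < 1 := by
    have : c < 2 := by rw [div_lt_iff₀ hγ']; linarith
    rw [abs_lt]; constructor <;> linarith [div_pos hγ hγ']
  choose F hF hFA using fun g : Lp H 2 μ =>
    hres (fun ω => c • x ω + (1 - c) • g ω) ((hx.const_smul c).add ((Lp.memLp g).const_smul _))
  obtain ⟨g, hg⟩ := Lp.exists_ae_fixedPoint_of_ae_norm_sub_le (K := ‖1 - c‖₊)
    (by rwa [← NNReal.coe_lt_coe, coe_nnnorm, Real.norm_eq_abs]) F hF fun f g => by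
      filter_upwards [hFA f, hFA g] with ω hf hg
      calc ‖F f ω - F g ω‖
          ≤ ‖c • x ω + (1 - c) • f ω - (c • x ω + (1 - c) • g ω)‖ :=
            (hA ω).norm_sub_le_of_smul_sub_mem hγ hf hg
        _ = ‖1 - c‖₊ * ‖f ω - g ω‖ := by
            rw [add_sub_add_left_eq_sub, ← smul_sub, norm_smul, coe_nnnorm]
  refine ⟨g, Lp.memLp g, ?_⟩
  filter_upwards [hFA g, hg] with ω hω hgω
  rw [hgω, show c • x ω + (1 - c) • g ω - g ω = c • (x ω - g ω) by
    rw [sub_smul, one_smul, smul_sub]; abel, smul_smul,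
    show γ⁻¹ * c = γ'⁻¹ by rw [mul_div, inv_mul_cancel₀ hγ.ne', one_div]] at hω
  exact hω

theorem HasL2Resolvent.of_one [CompleteSpace H] (hA : ∀ ω, MonotoneOp (A ω))
    (hres : HasL2Resolvent A μ 1) {γ : ℝ} (hγ : 0 < γ) : HasL2Resolvent A μ γ := by
  have hpow : ∀ n : ℕ, HasL2Resolvent A μ ((2 / 3 : ℝ) ^ n) := by
    intro n
    induction n with
    | zero => simpa using hres
    | succ n ih =>
      have hpos : (0 : ℝ) < (2 / 3) ^ n := by positivity
      exact ih.of_lt_two_mul hA hpos (by positivity) (by rw [pow_succ]; linarith)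
  obtain ⟨n, hn⟩ := exists_pow_lt_of_lt_one (by linarith : (0 : ℝ) < 2 * γ)
    (by norm_num : (2 / 3 : ℝ) < 1)
  exact (hpow n).of_lt_two_mul hA (by positivity) hγ hn

-- Minty's argument: test against the resolvent `p` of `x + x'`, which gives `‖x - p‖ = 0` a.e.
theorem HasL2Resolvent.ae_mem_of_forall_integral_inner_nonneg (hres : HasL2Resolvent A μ 1)
    {x x' : Ω → H} (hx : MemLp x 2 μ) (hx' : MemLp x' 2 μ)
    (h : ∀ y y' : Ω → H, MemLp y 2 μ → MemLp y' 2 μ → (∀ᵐ ω ∂μ, y' ω ∈ A ω (y ω)) →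
      0 ≤ ∫ ω, ⟪x ω - y ω, x' ω - y' ω⟫ ∂μ) :
    ∀ᵐ ω ∂μ, x' ω ∈ A ω (x ω) := by
  obtain ⟨p, hp, hpA₁⟩ := hres _ (hx.add hx')
  have hpA : ∀ᵐ ω ∂μ, x ω + x' ω - p ω ∈ A ω (p ω) := by
    filter_upwards [hpA₁] with ω hω
    simpa using hω
  have hint := h p (fun ω => x ω + x' ω - p ω) hp ((hx.add hx').sub hp) hpA
  have hinner : ∀ ω, ⟪x ω - p ω, x' ω - (x ω + x' ω - p ω)⟫ = -‖x ω - p ω‖ ^ 2 := fun ω => by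
    rw [show x' ω - (x ω + x' ω - p ω) = -(x ω - p ω) by abel, inner_neg_right,
      real_inner_self_eq_norm_sq]
  simp only [hinner, integral_neg, Left.nonneg_neg_iff] at hint
  have hzero : (fun ω => ‖x ω - p ω‖ ^ 2) =ᵐ[μ] 0 :=
    (integral_eq_zero_iff_of_nonneg (fun ω => sq_nonneg _)
      ((memLp_two_iff_integrable_sq_norm (hx.sub hp).1).1 (hx.sub hp))).1
      (le_antisymm hint (integral_nonneg fun ω => sq_nonneg _))
  filter_upwards [hzero, hpA] with ω hω hpω
  have hxp : x ω = p ω := by simpa [sub_eq_zero] using hω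
  simpa [hxp] using hpω

end DirectIntegral

theorem direct_integral_maximally_monotone_general
    {Ω H : Type*} [MeasurableSpace Ω] {μ : Measure Ω}
    [NormedAddCommGroup H] [InnerProductSpace ℝ H] [CompleteSpace H]
    (A : Ω → H → Set H) (hA : ∀ ω, MaximallyMonotoneOp (A ω))
    -- `J ω` is the resolvent of `A ω`
    (J : Ω → H → H) (hJ : ∀ ω, ∀ u : H, u - J ω u ∈ A ω (J ω u))
    (hJmeas : ∀ x : Ω → H, MemLp x 2 μ →
      AEStronglyMeasurable (fun ω => J ω (x ω)) μ)
    (hdom : ∃ x x' : Ω → H, MemLp x 2 μ ∧ MemLp x' 2 μ ∧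
      ∀ᵐ ω ∂μ, x' ω ∈ A ω (x ω)) :
    -- `A` is maximally monotone on `L²(Ω, μ; H)`
    (∀ x y x' y' : Ω → H, MemLp x 2 μ → MemLp y 2 μ → MemLp x' 2 μ → MemLp y' 2 μ →
      (∀ᵐ ω ∂μ, x' ω ∈ A ω (x ω)) → (∀ᵐ ω ∂μ, y' ω ∈ A ω (y ω)) →
        0 ≤ ∫ ω, ⟪x ω - y ω, x' ω - y' ω⟫ ∂μ) ∧
    (∀ x x' : Ω → H, MemLp x 2 μ → MemLp x' 2 μ →
      (∀ y y' : Ω → H, MemLp y 2 μ → MemLp y' 2 μ →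
        (∀ᵐ ω ∂μ, y' ω ∈ A ω (y ω)) →
          0 ≤ ∫ ω, ⟪x ω - y ω, x' ω - y' ω⟫ ∂μ) →
        ∀ᵐ ω ∂μ, x' ω ∈ A ω (x ω)) ∧
    -- for every `γ > 0` the resolvent of `A` acts fiberwise
    ∀ γ : ℝ, 0 < γ → ∀ x : Ω → H, MemLp x 2 μ →
      (∃ p : Ω → H, MemLp p 2 μ ∧ ∀ᵐ ω ∂μ, γ⁻¹ • (x ω - p ω) ∈ A ω (p ω)) ∧
      ∀ p q : Ω → H, MemLp p 2 μ → MemLp q 2 μ →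
        (∀ᵐ ω ∂μ, γ⁻¹ • (x ω - p ω) ∈ A ω (p ω)) →
        (∀ᵐ ω ∂μ, γ⁻¹ • (x ω - q ω) ∈ A ω (q ω)) →
          p =ᵐ[μ] q := by
  have hmono : ∀ ω, MonotoneOp (A ω) := fun ω => (hA ω).1
  obtain ⟨x₀, x₀', hx₀, hx₀', hx₀A⟩ := hdom
  have hJA : ∀ x : Ω → H, ∀ᵐ ω ∂μ, (1 : ℝ)⁻¹ • (x ω - J ω (x ω)) ∈ A ω (J ω (x ω)) :=
    fun x => .of_forall fun ω => by simpa using hJ ω (x ω)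
  have hres : HasL2Resolvent A μ 1 := fun x hx =>
    ⟨_, memLp_of_ae_smul_sub_mem hmono one_pos hx₀ hx₀' hx₀A hx (hJmeas x hx) (hJA x), hJA x⟩
  refine ⟨fun x y x' y' _ _ _ _ hxA hyA => ?_, fun x x' hx hx' h =>
    hres.ae_mem_of_forall_integral_inner_nonneg hx hx' h, fun γ hγ x hx =>
    ⟨hres.of_one hmono hγ x hx, fun p q _ _ hpA hqA => ?_⟩⟩
  · refine integral_nonneg_of_ae ?_
    filter_upwards [hxA, hyA] with ω hxω hyω
    exact hmono ω _ _ _ _ hxω hyω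
  · filter_upwards [hpA, hqA] with ω hpω hqω
    simpa [sub_eq_zero] using (hmono ω).norm_sub_le_of_smul_sub_mem hγ hpω hqω

theorem direct_integral_maximally_monotone
    {Ω H : Type*} [MeasurableSpace Ω] {μ : Measure Ω} [SigmaFinite μ]
    [NormedAddCommGroup H] [InnerProductSpace ℝ H] [CompleteSpace H]
    [SecondCountableTopology H]
    (A : Ω → H → Set H) (hA : ∀ ω, MaximallyMonotoneOp (A ω))
    -- `J ω` is the resolvent of `A ω`
    (J : Ω → H → H) (hJ : ∀ ω, ∀ u : H, u - J ω u ∈ A ω (J ω u))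
    (hJmeas : ∀ x : Ω → H, MemLp x 2 μ →
      AEStronglyMeasurable (fun ω => J ω (x ω)) μ)
    (hdom : ∃ x x' : Ω → H, MemLp x 2 μ ∧ MemLp x' 2 μ ∧
      ∀ᵐ ω ∂μ, x' ω ∈ A ω (x ω)) :
    -- `A` is maximally monotone on `L²(Ω, μ; H)`
    (∀ x y x' y' : Ω → H, MemLp x 2 μ → MemLp y 2 μ → MemLp x' 2 μ → MemLp y' 2 μ →
      (∀ᵐ ω ∂μ, x' ω ∈ A ω (x ω)) → (∀ᵐ ω ∂μ, y' ω ∈ A ω (y ω)) →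
        0 ≤ ∫ ω, ⟪x ω - y ω, x' ω - y' ω⟫ ∂μ) ∧
    (∀ x x' : Ω → H, MemLp x 2 μ → MemLp x' 2 μ →
      (∀ y y' : Ω → H, MemLp y 2 μ → MemLp y' 2 μ →
        (∀ᵐ ω ∂μ, y' ω ∈ A ω (y ω)) →
          0 ≤ ∫ ω, ⟪x ω - y ω, x' ω - y' ω⟫ ∂μ) →
        ∀ᵐ ω ∂μ, x' ω ∈ A ω (x ω)) ∧
    -- for every `γ > 0` the resolvent of `A` acts fiberwise
    ∀ γ : ℝ, 0 < γ → ∀ x : Ω → H, MemLp x 2 μ →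
      (∃ p : Ω → H, MemLp p 2 μ ∧ ∀ᵐ ω ∂μ, γ⁻¹ • (x ω - p ω) ∈ A ω (p ω)) ∧
      ∀ p q : Ω → H, MemLp p 2 μ → MemLp q 2 μ →
        (∀ᵐ ω ∂μ, γ⁻¹ • (x ω - p ω) ∈ A ω (p ω)) →
        (∀ᵐ ω ∂μ, γ⁻¹ • (x ω - q ω) ∈ A ω (q ω)) →
          p =ᵐ[μ] q :=
  direct_integral_maximally_monotone_general A hA J hJ hJmeas hdom
end

section
/- Let (Ω, F, μ) be a σ-finite measure space, H a separable real Hilbert space, and for each ω let A_ω : H → 2^H be maximally monotone. Define A on L²(Ω, μ; H) by x* ∈ Ax iff x*(ω) ∈ A_ω(x(ω)) a.e., and assume dom A ≠ ∅. If A is maximally monotone, then for every fixed u ∈ H the map ω ↦ J_{A_ω}(u) is measurable from Ω to H. -/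
/-!
By Minty's theorem `I + A` is surjective for the maximally monotone operator `A` on
`L²(Ω, μ; H)`: for every `f ∈ L²` there is `X ∈ L²` with `f ω - X ω ∈ A_ω (X ω)` a.e.
For `f = 1_s u` with `μ s < ∞`, monotonicity of `A_ω` forces `X ω = J_ω u` for a.e. `ω ∈ s`,
so `ω ↦ J_ω u` is a.e. strongly measurable on each set of a σ-finite exhaustion, hence on `Ω`.

Minty's theorem is proved with Fitzpatrick's function
`φ z = sup {⟪z₁, y'⟫ + ⟪y, z₂⟫ - ⟪y, y'⟫ | y' ∈ A y}`: maximality gives `φ z ≥ ⟪z₁, z₂⟫`,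
the strongly convex function `φ + ½‖·‖²` attains its minimum at some `(a, b)`, and the
first-order optimality condition there shows `-a ∈ A (-b)` and then `a + b = 0`.
-/

open MeasureTheory RealInnerProductSpace

open Filter Topology

lemma norm_prod_sq_le {E F : Type*} [SeminormedAddCommGroup E] [SeminormedAddCommGroup F]
    (z : E × F) : ‖z‖ ^ 2 ≤ ‖z.1‖ ^ 2 + ‖z.2‖ ^ 2 := by
  rw [Prod.norm_def]
  rcases le_total ‖z.1‖ ‖z.2‖ with h | h
  · rw [max_eq_right h]; nlinarith [sq_nonneg ‖z.1‖]
  · rw [max_eq_left h]; nlinarith [sq_nonneg ‖z.2‖]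

section StronglyConvexFamily

variable {F ι : Type*} [NormedAddCommGroup F] [NormedSpace ℝ F] {φ : ι → F → ℝ}

lemma norm_sub_sq_le_of_forall_le_add
    (hconv : ∀ i, StrongConvexOn Set.univ 1 (φ i))
    {m : ℝ} (hm : ∀ z r, (∀ i, φ i z ≤ r) → m ≤ r) {w w' : F} {ε δ : ℝ}
    (hw : ∀ i, φ i w ≤ m + ε) (hw' : ∀ i, φ i w' ≤ m + δ) :
    ‖w - w'‖ ^ 2 ≤ 4 * (ε + δ) := by
  have := hm ((1 / 2 : ℝ) • w + (1 / 2 : ℝ) • w') ((m + ε + (m + δ)) / 2 - ‖w - w'‖ ^ 2 / 8)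
    fun i => by
      have := (hconv i).2 (Set.mem_univ w) (Set.mem_univ w') (by norm_num : (0 : ℝ) ≤ 1 / 2)
        (by norm_num : (0 : ℝ) ≤ 1 / 2) (by norm_num)
      simp only [smul_eq_mul] at this
      linarith [hw i, hw' i]
  linarith

/-- `z₀` minimizes `⨆ i, φ i`, with minimum `m`; stated without `⨆`, which may be infinite. -/
theorem exists_minimizer_sup_of_strongConvexOn [CompleteSpace F]
    (hcont : ∀ i, Continuous (φ i))
    (hconv : ∀ i, StrongConvexOn Set.univ 1 (φ i))
    (hne : ∃ z r, ∀ i, φ i z ≤ r) (hbdd : ∃ c, ∀ z r, (∀ i, φ i z ≤ r) → c ≤ r) :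
    ∃ z₀ m, (∀ i, φ i z₀ ≤ m) ∧ ∀ z r, (∀ i, φ i z ≤ r) → m ≤ r := by
  set R : Set ℝ := {r | ∃ z, ∀ i, φ i z ≤ r}
  have hRne : R.Nonempty := let ⟨z, r, h⟩ := hne; ⟨r, z, h⟩
  have hRbdd : BddBelow R := let ⟨c, h⟩ := hbdd; ⟨c, fun r ⟨z, hz⟩ => h z r hz⟩
  have hm : ∀ z r, (∀ i, φ i z ≤ r) → sInf R ≤ r := fun z r h => csInf_le hRbdd ⟨z, h⟩
  have happrox (n : ℕ) : ∃ z, ∀ i, φ i z ≤ sInf R + 1 / (n + 1) := by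
    obtain ⟨r, ⟨z, hz⟩, hr⟩ := exists_lt_of_csInf_lt hRne (lt_add_of_pos_right (sInf R)
      (Nat.one_div_pos_of_nat (α := ℝ) (n := n)))
    exact ⟨z, fun i => (hz i).trans hr.le⟩
  choose z hz using happrox
  have hcauchy : CauchySeq z := by
    refine Metric.cauchySeq_iff'.2 fun ε hε => ?_
    obtain ⟨N, hN⟩ := exists_nat_one_div_lt (by positivity : 0 < ε ^ 2 / 8)
    refine ⟨N, fun n hn => ?_⟩
    have hnN : (1 : ℝ) / (n + 1) ≤ 1 / (N + 1) := by gcongr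
    have := norm_sub_sq_le_of_forall_le_add hconv hm (hz n) (hz N)
    rw [dist_eq_norm]
    exact lt_of_pow_lt_pow_left₀ 2 hε.le (by linarith)
  obtain ⟨z₀, hz₀⟩ := cauchySeq_tendsto_of_complete hcauchy
  refine ⟨z₀, sInf R, fun i => ?_, hm⟩
  refine le_of_tendsto_of_tendsto' ((hcont i).continuousAt.tendsto.comp hz₀) ?_ (fun n => hz n i)
  simpa using tendsto_const_nhds.add (tendsto_one_div_add_atTop_nhds_zero_nat (𝕜 := ℝ))

end StronglyConvexFamily

section MonotoneOp

variable {E : Type*} [NormedAddCommGroup E] [InnerProductSpace ℝ E]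

lemma norm_smul_add_smul_sq {a b : ℝ} (hab : a + b = 1) (x y : E) :
    ‖a • x + b • y‖ ^ 2 = a * ‖x‖ ^ 2 + b * ‖y‖ ^ 2 - a * b * ‖x - y‖ ^ 2 := by
  rw [norm_add_sq_real, norm_sub_sq_real, norm_smul, norm_smul, real_inner_smul_left,
    real_inner_smul_right, Real.norm_eq_abs, Real.norm_eq_abs, mul_pow, mul_pow, sq_abs, sq_abs]
  obtain rfl := eq_sub_of_add_eq hab
  ring

def fitzpatrickTerm (p z : E × E) : ℝ := ⟪z.1, p.2⟫ + ⟪p.1, z.2⟫ - ⟪p.1, p.2⟫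

lemma inner_sub_sub_eq_sub_fitzpatrickTerm (p z : E × E) :
    ⟪z.1 - p.1, z.2 - p.2⟫ = ⟪z.1, z.2⟫ - fitzpatrickTerm p z := by
  simp only [fitzpatrickTerm, inner_sub_left, inner_sub_right]
  ring

lemma fitzpatrickTerm_smul_add_smul {a b : ℝ} (hab : a + b = 1) (p z w : E × E) :
    fitzpatrickTerm p (a • z + b • w) = a * fitzpatrickTerm p z + b * fitzpatrickTerm p w := by
  simp only [fitzpatrickTerm, Prod.fst_add, Prod.snd_add, Prod.smul_fst, Prod.smul_snd,
    inner_add_left, inner_add_right, real_inner_smul_left, real_inner_smul_right]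
  obtain rfl := eq_sub_of_add_eq hab
  ring

lemma strongConvexOn_fitzpatrickTerm_add_half_norm_sq (p : E × E) :
    StrongConvexOn Set.univ 1 fun z => fitzpatrickTerm p z + (‖z.1‖ ^ 2 + ‖z.2‖ ^ 2) / 2 := by
  refine ⟨convex_univ, fun z _ w _ a b ha hb hab => ?_⟩
  simp only [Prod.fst_add, Prod.snd_add, Prod.smul_fst, Prod.smul_snd, smul_eq_mul,
    fitzpatrickTerm_smul_add_smul hab, norm_smul_add_smul_sq hab]
  have := norm_prod_sq_le (z - w)
  have hab' := mul_nonneg ha hb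
  simp only [Prod.fst_sub, Prod.snd_sub] at this
  nlinarith

lemma MonotoneOp.fitzpatrickTerm_le {A : E → Set E} (hA : MonotoneOp A) {p z : E × E}
    (hp : p.2 ∈ A p.1) (hz : z.2 ∈ A z.1) : fitzpatrickTerm p z ≤ ⟪z.1, z.2⟫ := by
  have := hA _ _ _ _ hz hp
  rw [inner_sub_sub_eq_sub_fitzpatrickTerm] at this
  linarith

lemma MaximallyMonotoneOp.exists_inner_le_fitzpatrickTerm {A : E → Set E}
    (hA : MaximallyMonotoneOp A) (z : E × E) :
    ∃ p : E × E, p.2 ∈ A p.1 ∧ ⟪z.1, z.2⟫ ≤ fitzpatrickTerm p z := by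
  by_contra! h
  have hz : z.2 ∈ A z.1 := hA.2 z.1 z.2 fun y y' hy => by
    have := h (y, y') hy
    rw [inner_sub_sub_eq_sub_fitzpatrickTerm (y, y')]
    linarith
  simpa [fitzpatrickTerm] using h z hz

lemma MonotoneOp.sub_inner_sub_le_of_isMin {A : E → Set E} (hA : MonotoneOp A) {a b : E} {c : ℝ}
    (hc : ∀ p : E × E, p.2 ∈ A p.1 → fitzpatrickTerm p (a, b) ≤ c)
    (hmin : ∀ z r, (∀ p : E × E, p.2 ∈ A p.1 →
      fitzpatrickTerm p z + (‖z.1‖ ^ 2 + ‖z.2‖ ^ 2) / 2 ≤ r) → c + (‖a‖ ^ 2 + ‖b‖ ^ 2) / 2 ≤ r)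
    {y y' : E} (hy : y' ∈ A y) : c - ⟪a, y - a⟫ - ⟪b, y' - b⟫ ≤ ⟪y, y'⟫ := by
  set D := ‖a - y‖ ^ 2 + ‖b - y'‖ ^ 2
  set R := ⟪y, y'⟫ + (‖y‖ ^ 2 + ‖y'‖ ^ 2) / 2 - D / 2
  -- compare the minimum with the value at `(1 - t) • (a, b) + t • (y, y')`, then let `t → 0`
  have key : ∀ t ∈ Set.Ioo (0 : ℝ) 1, c + (‖a‖ ^ 2 + ‖b‖ ^ 2) / 2 ≤ R + t / 2 * D := by
    rintro t ⟨ht0, ht1⟩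
    have h := hmin ((1 - t) • (a, b) + t • (y, y'))
      ((1 - t) * c + t * ⟪y, y'⟫ + (‖(1 - t) • a + t • y‖ ^ 2 + ‖(1 - t) • b + t • y'‖ ^ 2) / 2)
      fun p hp => by
        rw [fitzpatrickTerm_smul_add_smul (by ring)]
        have h1 := mul_le_mul_of_nonneg_left (hc p hp) (sub_nonneg.2 ht1.le)
        have h2 := mul_le_mul_of_nonneg_left (hA.fitzpatrickTerm_le hp (z := (y, y')) hy) ht0.le
        simp only [Prod.fst_add, Prod.snd_add, Prod.smul_fst, Prod.smul_snd]
        linarith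
    rw [norm_smul_add_smul_sq (by ring), norm_smul_add_smul_sq (by ring)] at h
    have : t * (c + (‖a‖ ^ 2 + ‖b‖ ^ 2) / 2) ≤ t * (R + t / 2 * D) := by
      linear_combination h
    exact le_of_mul_le_mul_left this ht0
  have hlim : Tendsto (fun t : ℝ => R + t / 2 * D) (𝓝[>] 0) (𝓝 R) := by
    have : Continuous fun t : ℝ => R + t / 2 * D := by fun_prop
    simpa using (this.tendsto 0).mono_left nhdsWithin_le_nhds
  have := ge_of_tendsto hlim (by filter_upwards [Ioo_mem_nhdsGT one_pos] with t ht using key t ht)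
  simp only [R, D, norm_sub_sq_real, inner_sub_right, real_inner_self_eq_norm_sq] at this ⊢
  linarith [real_inner_comm a y, real_inner_comm b y']

lemma MonotoneOp.eq_of_sub_mem {A : E → Set E} (hA : MonotoneOp A) {u x y : E}
    (hx : u - x ∈ A x) (hy : u - y ∈ A y) : x = y := by
  have := hA _ _ _ _ hx hy
  rw [sub_sub_sub_cancel_left, ← neg_sub x y, inner_neg_right, real_inner_self_eq_norm_sq] at this
  exact sub_eq_zero.1 (norm_eq_zero.1 ((sq_nonpos_iff _).1 (by linarith)))

end MonotoneOp

section Minty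

variable {E : Type*} [NormedAddCommGroup E] [InnerProductSpace ℝ E]

lemma MaximallyMonotoneOp.preimage_add_const {A : E → Set E} (hA : MaximallyMonotoneOp A)
    (f : E) : MaximallyMonotoneOp fun x => (· + f) ⁻¹' A x := by
  refine ⟨fun x y x' y' hx hy => by simpa using hA.1 _ _ _ _ hx hy, fun x x' h => ?_⟩
  refine hA.2 x (x' + f) fun y y' hy => ?_
  have := h y (y' - f) (by simpa using hy)
  rwa [sub_sub_eq_add_sub] at this

variable [CompleteSpace E]

lemma MaximallyMonotoneOp.exists_neg_mem {A : E → Set E} (hA : MaximallyMonotoneOp A) :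
    ∃ x, -x ∈ A x := by
  set φ : {p : E × E // p.2 ∈ A p.1} → E × E → ℝ :=
    fun p z => fitzpatrickTerm p.1 z + (‖z.1‖ ^ 2 + ‖z.2‖ ^ 2) / 2
  have hquad (z : E × E) : 0 ≤ ⟪z.1, z.2⟫ + (‖z.1‖ ^ 2 + ‖z.2‖ ^ 2) / 2 := by
    nlinarith [norm_add_sq_real z.1 z.2, sq_nonneg ‖z.1 + z.2‖]
  have hne : ∃ z r, ∀ p, φ p z ≤ r := by
    obtain ⟨p₀, hp₀, -⟩ := hA.exists_inner_le_fitzpatrickTerm 0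
    exact ⟨p₀, ⟪p₀.1, p₀.2⟫ + (‖p₀.1‖ ^ 2 + ‖p₀.2‖ ^ 2) / 2, fun p =>
      add_le_add_left (hA.1.fitzpatrickTerm_le p.2 hp₀) _⟩
  have hbdd : ∃ c, ∀ z r, (∀ p, φ p z ≤ r) → c ≤ r := by
    refine ⟨0, fun z r h => ?_⟩
    obtain ⟨p, hp, hle⟩ := hA.exists_inner_le_fitzpatrickTerm z
    have := h ⟨p, hp⟩
    simp only [φ] at this
    linarith [hquad z]
  obtain ⟨⟨a, b⟩, m, hab, hmin⟩ := exists_minimizer_sup_of_strongConvexOn (φ := φ)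
    (fun p => by simp only [φ, fitzpatrickTerm]; fun_prop)
    (fun p => strongConvexOn_fitzpatrickTerm_add_half_norm_sq p.1) hne hbdd
  set c := m - (‖a‖ ^ 2 + ‖b‖ ^ 2) / 2
  have hc (p : E × E) (hp : p.2 ∈ A p.1) : fitzpatrickTerm p (a, b) ≤ c := by
    linarith [hab ⟨p, hp⟩]
  have hsub {y y' : E} (hy : y' ∈ A y) : c - ⟪a, y - a⟫ - ⟪b, y' - b⟫ ≤ ⟪y, y'⟫ :=
    hA.1.sub_inner_sub_le_of_isMin hc (fun z r h => by
      simpa [c] using hmin z r fun p => h p.1 p.2) hy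
  have hcab : ⟪a, b⟫ ≤ c := by
    obtain ⟨p, hp, hle⟩ := hA.exists_inner_le_fitzpatrickTerm (a, b)
    exact hle.trans (hc p hp)
  have hmem : -a ∈ A (-b) := hA.2 (-b) (-a) fun y y' hy => by
    have := hsub hy
    simp only [inner_sub_left, inner_sub_right, inner_neg_left, inner_neg_right,
      real_inner_self_eq_norm_sq] at this ⊢
    nlinarith [hquad (a, b), real_inner_comm a b, real_inner_comm a y, real_inner_comm b y']
  have hzero : ‖a + b‖ ^ 2 ≤ 0 := by
    have := hsub hmem
    simp only [inner_sub_right, inner_neg_left, inner_neg_right,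
      real_inner_self_eq_norm_sq] at this
    nlinarith [norm_add_sq_real a b, sq_nonneg ‖a + b‖, real_inner_comm a b]
  have hsum : a + b = 0 := norm_eq_zero.1 ((sq_nonpos_iff _).1 hzero)
  exact ⟨a, by rwa [← eq_neg_of_add_eq_zero_left hsum] at hmem⟩

theorem MaximallyMonotoneOp.exists_sub_mem {A : E → Set E} (hA : MaximallyMonotoneOp A)
    (f : E) : ∃ x, f - x ∈ A x := by
  obtain ⟨x, hx⟩ := (hA.preimage_add_const f).exists_neg_mem
  exact ⟨x, by simpa [neg_add_eq_sub] using hx⟩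

end Minty

section L2

variable {Ω H : Type*} [MeasurableSpace Ω] {μ : Measure Ω} [NormedAddCommGroup H]
  [InnerProductSpace ℝ H]

def fiberwiseL2Op (A : Ω → H → Set H) (μ : Measure Ω) : Lp H 2 μ → Set (Lp H 2 μ) :=
  fun x => {x' | ∀ᵐ ω ∂μ, x' ω ∈ A ω (x ω)}

lemma L2.inner_sub_sub_eq_integral (x y x' y' : Lp H 2 μ) :
    ⟪x - y, x' - y'⟫ = ∫ ω, ⟪x ω - y ω, x' ω - y' ω⟫ ∂μ := by
  rw [L2.inner_def]
  refine integral_congr_ae ?_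
  filter_upwards [Lp.coeFn_sub x y, Lp.coeFn_sub x' y'] with ω h h'
  rw [h, h', Pi.sub_apply, Pi.sub_apply]

lemma monotoneOp_fiberwiseL2Op {A : Ω → H → Set H} (hA : ∀ ω, MonotoneOp (A ω)) :
    MonotoneOp (fiberwiseL2Op A μ) := fun x y x' y' hx hy => by
  rw [L2.inner_sub_sub_eq_integral]
  exact integral_nonneg_of_ae (by filter_upwards [hx, hy] with ω h h' using hA ω _ _ _ _ h h')

lemma maximallyMonotoneOp_fiberwiseL2Op {A : Ω → H → Set H} (hA : ∀ ω, MonotoneOp (A ω))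
    (hmax : ∀ x x' : Ω → H, MemLp x 2 μ → MemLp x' 2 μ →
      (∀ y y' : Ω → H, MemLp y 2 μ → MemLp y' 2 μ →
        (∀ᵐ ω ∂μ, y' ω ∈ A ω (y ω)) →
          0 ≤ ∫ ω, ⟪x ω - y ω, x' ω - y' ω⟫ ∂μ) →
        ∀ᵐ ω ∂μ, x' ω ∈ A ω (x ω)) :
    MaximallyMonotoneOp (fiberwiseL2Op A μ) := by
  refine ⟨monotoneOp_fiberwiseL2Op hA, fun x x' h =>
    hmax x x' (Lp.memLp x) (Lp.memLp x') fun y y' hy hy' hyy' => ?_⟩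
  have hmem : hy'.toLp y' ∈ fiberwiseL2Op A μ (hy.toLp y) := by
    filter_upwards [hy.coeFn_toLp, hy'.coeFn_toLp, hyy'] with ω h h' h''
    rwa [h, h']
  have := h _ _ hmem
  rw [L2.inner_sub_sub_eq_integral] at this
  refine this.trans_eq (integral_congr_ae ?_)
  filter_upwards [hy.coeFn_toLp, hy'.coeFn_toLp] with ω h h'
  rw [h, h']

lemma aestronglyMeasurable_restrict_resolvent [CompleteSpace H] {A : Ω → H → Set H}
    (hA : ∀ ω, MonotoneOp (A ω)) (hAL2 : MaximallyMonotoneOp (fiberwiseL2Op A μ))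
    {J : Ω → H → H} (hJ : ∀ ω, ∀ u : H, u - J ω u ∈ A ω (J ω u))
    {s : Set Ω} (hs : MeasurableSet s) (hμs : μ s ≠ ⊤) (u : H) :
    AEStronglyMeasurable (fun ω => J ω u) (μ.restrict s) := by
  obtain ⟨X, hX⟩ := hAL2.exists_sub_mem (indicatorConstLp 2 hs hμs u)
  refine (Lp.aestronglyMeasurable X).restrict.congr ?_
  rw [EventuallyEq, ae_restrict_iff' hs]
  filter_upwards [hX, indicatorConstLp_coeFn (p := 2) (hs := hs) (hμs := hμs) (c := u),
    Lp.coeFn_sub (indicatorConstLp 2 hs hμs u) X] with ω hω hind hsub hωs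
  rw [hsub, Pi.sub_apply, hind, Set.indicator_of_mem hωs] at hω
  exact (hA ω).eq_of_sub_mem hω (hJ ω u)

end L2

theorem resolvent_field_measurable_of_maximally_monotone_general
    {Ω H : Type*} [MeasurableSpace Ω] {μ : Measure Ω} [SigmaFinite μ]
    [NormedAddCommGroup H] [InnerProductSpace ℝ H] [CompleteSpace H]
    (A : Ω → H → Set H) (hA : ∀ ω, MaximallyMonotoneOp (A ω))
    -- `J ω` is the resolvent of `A ω`
    (J : Ω → H → H) (hJ : ∀ ω, ∀ u : H, u - J ω u ∈ A ω (J ω u))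
    -- `A` is maximally monotone on `L²(Ω, μ; H)`
    (hmax : ∀ x x' : Ω → H, MemLp x 2 μ → MemLp x' 2 μ →
      (∀ y y' : Ω → H, MemLp y 2 μ → MemLp y' 2 μ →
        (∀ᵐ ω ∂μ, y' ω ∈ A ω (y ω)) →
          0 ≤ ∫ ω, ⟪x ω - y ω, x' ω - y' ω⟫ ∂μ) →
        ∀ᵐ ω ∂μ, x' ω ∈ A ω (x ω)) :
    ∀ u : H, AEStronglyMeasurable (fun ω => J ω u) μ := by
  intro u
  have hmono (ω : Ω) : MonotoneOp (A ω) := (hA ω).1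
  have hAL2 := maximallyMonotoneOp_fiberwiseL2Op hmono hmax
  rw [← Measure.restrict_univ (μ := μ), ← iUnion_spanningSets μ, aestronglyMeasurable_iUnion_iff]
  exact fun n => aestronglyMeasurable_restrict_resolvent hmono hAL2 hJ
    (measurableSet_spanningSets μ n) (measure_spanningSets_lt_top μ n).ne u

theorem resolvent_field_measurable_of_maximally_monotone
    {Ω H : Type*} [MeasurableSpace Ω] {μ : Measure Ω} [SigmaFinite μ]
    [NormedAddCommGroup H] [InnerProductSpace ℝ H] [CompleteSpace H]
    [SecondCountableTopology H]
    (A : Ω → H → Set H) (hA : ∀ ω, MaximallyMonotoneOp (A ω))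
    -- `J ω` is the resolvent of `A ω`
    (J : Ω → H → H) (hJ : ∀ ω, ∀ u : H, u - J ω u ∈ A ω (J ω u))
    (hdom : ∃ x x' : Ω → H, MemLp x 2 μ ∧ MemLp x' 2 μ ∧
      ∀ᵐ ω ∂μ, x' ω ∈ A ω (x ω))
    -- `A` is maximally monotone on `L²(Ω, μ; H)`
    (hmax : ∀ x x' : Ω → H, MemLp x 2 μ → MemLp x' 2 μ →
      (∀ y y' : Ω → H, MemLp y 2 μ → MemLp y' 2 μ →
        (∀ᵐ ω ∂μ, y' ω ∈ A ω (y ω)) →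
          0 ≤ ∫ ω, ⟪x ω - y ω, x' ω - y' ω⟫ ∂μ) →
        ∀ᵐ ω ∂μ, x' ω ∈ A ω (x ω)) :
    ∀ u : H, AEStronglyMeasurable (fun ω => J ω u) μ :=
  resolvent_field_measurable_of_maximally_monotone_general A hA J hJ hmax
end
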